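/- arXiv:1804.10189 — 2 statements merged into one kernel-verified Lean document; each statement's English description precedes it below -/
import Mathlib

section
/- Suppose 0 < E < N, the message W_1 satisfies H(W_1) = L, E-security holds, and ε-correctness holds for message 1. Then (1 − E/N) · H(A_{[1:N]}^{[1]} | Q_{[1:N]}^{[1]}) ≥ L − ε + (1/C(N,E)) · Σ_{ℰ ⊆ [1:N], |ℰ| = E} H(A_{[1:N]∖ℰ}^{[1]} | W_1, A_ℰ^{[1]}, Q_{[1:N]}^{[1]}), where the sum ranges over all subsets ℰ of [1:N] of size E and C(N,E) is the binomial coefficient. -/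
open Finset

/-- Probability that the finitely-valued random variable `X` (on the finite
probability space with pmf `p`) takes the value `x`. -/
noncomputable def prC {Ω α : Type*} [Fintype Ω] [DecidableEq α]
    (p : Ω → ℝ) (X : Ω → α) (x : α) : ℝ :=
  ∑ ω, if X ω = x then p ω else 0

/-- Shannon entropy `H(X)` of a finitely-valued random variable. -/
noncomputable def entH {Ω α : Type*} [Fintype Ω] [Fintype α] [DecidableEq α]
    (p : Ω → ℝ) (X : Ω → α) : ℝ :=
  -∑ x, prC p X x * Real.log (prC p X x)

/-- Conditional entropy `H(X|Y) = H(X,Y) - H(Y)`. -/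
noncomputable def condEntH {Ω α β : Type*} [Fintype Ω] [Fintype α] [DecidableEq α]
    [Fintype β] [DecidableEq β] (p : Ω → ℝ) (X : Ω → α) (Y : Ω → β) : ℝ :=
  entH p (fun ω => (X ω, Y ω)) - entH p Y

/-- Mutual information `I(X;Y) = H(X) + H(Y) - H(X,Y)`. -/
noncomputable def mutInfH {Ω α β : Type*} [Fintype Ω] [Fintype α] [DecidableEq α]
    [Fintype β] [DecidableEq β] (p : Ω → ℝ) (X : Ω → α) (Y : Ω → β) : ℝ :=
  entH p X + entH p Y - entH p (fun ω => (X ω, Y ω))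

section core
variable {Ω α β γ : Type*} [Fintype Ω] {p : Ω → ℝ}

lemma prC_nonneg (hp0 : ∀ ω, 0 ≤ p ω) [DecidableEq α] (X : Ω → α) (x : α) :
    0 ≤ prC p X x := by
  unfold prC
  exact Finset.sum_nonneg fun ω _ => by split <;> simp [hp0 ω]

lemma sum_prC (hp1 : ∑ ω, p ω = 1) [DecidableEq α] [Fintype α] (X : Ω → α) :
    ∑ x, prC p X x = 1 := by
  unfold prC
  rw [Finset.sum_comm]
  simp only [Finset.sum_ite_eq, Finset.mem_univ, if_true]
  exact hp1

/-- relabeling invariance -/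
lemma entH_congr [Fintype α] [DecidableEq α] [Fintype γ] [DecidableEq γ]
    {X : Ω → α} {Y : Ω → γ} (f : α → γ) (hf : Function.Injective f)
    (h : ∀ ω, Y ω = f (X ω)) : entH p Y = entH p X := by
  have hpr : ∀ x, prC p Y (f x) = prC p X x := by
    intro x
    unfold prC
    refine Finset.sum_congr rfl fun ω _ => ?_
    rw [h ω]
    by_cases hx : X ω = x
    · simp [hx]
    · rw [if_neg (fun hc => hx (hf hc)), if_neg hx]
  have hout : ∀ y, y ∉ Finset.image f Finset.univ → prC p Y y = 0 := by
    intro y hy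
    unfold prC
    refine Finset.sum_eq_zero fun ω _ => ?_
    rw [h ω, if_neg]
    intro hc
    exact hy (by rw [← hc]; exact Finset.mem_image_of_mem f (Finset.mem_univ _))
  unfold entH
  congr 1
  rw [← Finset.sum_subset (Finset.subset_univ (Finset.image f Finset.univ))
    (fun y _ hy => by rw [hout y hy]; simp)]
  rw [Finset.sum_image (fun a _ b _ hab => hf hab)]
  exact Finset.sum_congr rfl fun x _ => by rw [hpr x]

lemma prC_marg_right (hp : True) [DecidableEq α] [DecidableEq β] [Fintype α]
    (X : Ω → α) (Y : Ω → β) (y : β) :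
    prC p Y y = ∑ x, prC p (fun ω => (X ω, Y ω)) (x, y) := by
  unfold prC
  rw [Finset.sum_comm]
  refine Finset.sum_congr rfl fun ω _ => ?_
  by_cases hy : Y ω = y
  · simp [hy, Prod.ext_iff, Finset.sum_ite_eq]
  · simp [hy, Prod.ext_iff]

lemma prC_marg_left [DecidableEq α] [DecidableEq β] [Fintype β]
    (X : Ω → α) (Y : Ω → β) (x : α) :
    prC p X x = ∑ y, prC p (fun ω => (X ω, Y ω)) (x, y) := by
  unfold prC
  rw [Finset.sum_comm]
  refine Finset.sum_congr rfl fun ω _ => ?_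
  by_cases hx : X ω = x
  · simp [hx, Prod.ext_iff, Finset.sum_ite_eq]
  · simp [hx, Prod.ext_iff]

/-- monotonicity: H(Y) ≤ H(X,Y) -/
lemma entH_mono (hp0 : ∀ ω, 0 ≤ p ω) [Fintype α] [DecidableEq α] [Fintype β] [DecidableEq β]
    (X : Ω → α) (Y : Ω → β) :
    entH p Y ≤ entH p (fun ω => (X ω, Y ω)) := by
  unfold entH
  rw [neg_le_neg_iff]
  rw [Fintype.sum_prod_type_right]
  refine Finset.sum_le_sum fun y _ => ?_
  rw [prC_marg_right trivial X Y y, Finset.sum_mul]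
  refine Finset.sum_le_sum fun x _ => ?_
  set q := prC p (fun ω => (X ω, Y ω)) (x, y) with hq
  have hq0 : 0 ≤ q := prC_nonneg hp0 _ _
  have hqm : q ≤ ∑ x, prC p (fun ω => (X ω, Y ω)) (x, y) :=
    Finset.single_le_sum (f := fun x' => prC p (fun ω => (X ω, Y ω)) (x', y))
      (fun x _ => prC_nonneg hp0 _ _) (Finset.mem_univ x)
  rcases eq_or_lt_of_le hq0 with h0 | h0
  · simp [← h0]
  · exact mul_le_mul_of_nonneg_left (Real.log_le_log h0 hqm) hq0

end core


section kern
variable {α β : Type*} [Fintype α] [Fintype β]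

lemma kernel_pt (q a b c : ℝ) (hq : 0 ≤ q) (hqa : q ≤ a) (hqb : q ≤ b) (hac : a ≤ c)
    (hc : 0 < c) :
    q - a * b / c ≤
      q * Real.log q + q * Real.log c - (q * Real.log a + q * Real.log b) := by
  rcases eq_or_lt_of_le hq with h0 | h0
  · have ha : 0 ≤ a := le_trans hq hqa
    have hb : 0 ≤ b := le_trans hq hqb
    rw [← h0]
    simp only [zero_mul, sub_zero, add_zero, zero_sub, zero_add, zero_div]
    have : 0 ≤ a * b / c := by positivity
    linarith
  · have ha : 0 < a := lt_of_lt_of_le h0 hqa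
    have hb : 0 < b := lt_of_lt_of_le h0 hqb
    set t := q * c / (a * b) with hts
    have ht : 0 < t := by positivity
    have hlog : 1 - 1 / t ≤ Real.log t := by
      have h2 := Real.log_le_sub_one_of_pos (x := t⁻¹) (by positivity)
      rw [Real.log_inv] at h2
      rw [one_div]
      linarith
    have hmul : q * (1 - 1 / t) ≤ q * Real.log t :=
      mul_le_mul_of_nonneg_left hlog (le_of_lt h0)
    have heq1 : q * (1 - 1 / t) = q - a * b / c := by
      rw [hts]; field_simp
    have heq2 : q * Real.log t =
        q * Real.log q + q * Real.log c - (q * Real.log a + q * Real.log b) := by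
      rw [hts, Real.log_div (by positivity) (by positivity),
        Real.log_mul (ne_of_gt h0) (ne_of_gt hc),
        Real.log_mul (ne_of_gt ha) (ne_of_gt hb)]
      ring
    linarith [heq1 ▸ heq2 ▸ hmul]

lemma kernel (q : α → β → ℝ) (hq : ∀ x y, 0 ≤ q x y) :
    ∑ x, ∑ y, (q x y * Real.log (∑ y', q x y') + q x y * Real.log (∑ x', q x' y))
      ≤ ∑ x, ∑ y, (q x y * Real.log (q x y) + q x y * Real.log (∑ x', ∑ y', q x' y')) := by
  set m3 := ∑ x', ∑ y', q x' y' with hm3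
  have hm30 : 0 ≤ m3 :=
    Finset.sum_nonneg fun x _ => Finset.sum_nonneg fun y _ => hq x y
  rcases eq_or_lt_of_le hm30 with h0 | h0
  · have hz : ∀ x y, q x y = 0 := by
      intro x y
      have h1 : ∑ y', q x y' ≤ m3 := by
        rw [hm3]
        exact Finset.single_le_sum
          (f := fun x' => ∑ y', q x' y')
          (fun x' _ => Finset.sum_nonneg fun y' _ => hq x' y') (Finset.mem_univ x)
      have h2 : q x y ≤ ∑ y', q x y' :=
        Finset.single_le_sum (fun y' _ => hq x y') (Finset.mem_univ y)
      have := hq x y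
      linarith
    simp [hz]
  · rw [← sub_nonneg, ← Finset.sum_sub_distrib]
    simp only [← Finset.sum_sub_distrib]
    have key : ∀ x y,
        q x y - (∑ y', q x y') * (∑ x', q x' y) / m3 ≤
          q x y * Real.log (q x y) + q x y * Real.log m3 -
            (q x y * Real.log (∑ y', q x y') + q x y * Real.log (∑ x', q x' y)) := by
      intro x y
      refine kernel_pt (q x y) _ _ m3 (hq x y) ?_ ?_ ?_ h0
      · exact Finset.single_le_sum (fun y' _ => hq x y') (Finset.mem_univ y)
      · exact Finset.single_le_sum (fun x' _ => hq x' y) (Finset.mem_univ x)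
      · rw [hm3]
        exact Finset.single_le_sum
          (f := fun x' => ∑ y', q x' y')
          (fun x' _ => Finset.sum_nonneg fun y' _ => hq x' y') (Finset.mem_univ x)
    have hsum : ∑ x, ∑ y, (q x y - (∑ y', q x y') * (∑ x', q x' y) / m3) = 0 := by
      simp only [Finset.sum_sub_distrib]
      have h1 : ∑ x, ∑ y, (∑ y', q x y') * (∑ x', q x' y) / m3
          = (∑ x, ∑ y', q x y') * (∑ y, ∑ x', q x' y) / m3 := by
        rw [Finset.sum_mul_sum]
        simp only [← Finset.sum_div]
      have h2 : ∑ y, ∑ x', q x' y = m3 := by rw [hm3]; exact Finset.sum_comm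
      rw [h1, h2, ← hm3]
      field_simp
      ring
    calc (0:ℝ) = ∑ x, ∑ y, (q x y - (∑ y', q x y') * (∑ x', q x' y) / m3) := hsum.symm
      _ ≤ _ := Finset.sum_le_sum fun x _ => Finset.sum_le_sum fun y _ => key x y

end kern

section s
variable {Ω α β γ : Type*} [Fintype Ω] {p : Ω → ℝ}
  [Fintype α] [DecidableEq α] [Fintype β] [DecidableEq β] [Fintype γ] [DecidableEq γ]

omit [DecidableEq α] [DecidableEq β] [DecidableEq γ] in
private lemma sum_rot (f : α → β → γ → ℝ) :
    ∑ x, ∑ y, ∑ z, f x y z = ∑ z, ∑ x, ∑ y, f x y z := by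
  rw [show (∑ x, ∑ y, ∑ z, f x y z) = ∑ x, ∑ z, ∑ y, f x y z from
    Finset.sum_congr rfl fun x _ => Finset.sum_comm]
  exact Finset.sum_comm

lemma entH_submod (hp0 : ∀ ω, 0 ≤ p ω) (X : Ω → α) (Y : Ω → β) (Z : Ω → γ) :
    entH p (fun ω => (X ω, Y ω, Z ω)) + entH p Z
      ≤ entH p (fun ω => (X ω, Z ω)) + entH p (fun ω => (Y ω, Z ω)) := by
  set q : α → β → γ → ℝ := fun x y z => prC p (fun ω => (X ω, Y ω, Z ω)) (x, y, z) with hqdef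
  have hq0 : ∀ x y z, 0 ≤ q x y z := fun x y z => prC_nonneg hp0 _ _
  have hm13 : ∀ x z, prC p (fun ω => (X ω, Z ω)) (x, z) = ∑ y, q x y z := by
    intro x z
    rw [hqdef]
    unfold prC
    rw [Finset.sum_comm]
    refine Finset.sum_congr rfl fun ω _ => ?_
    by_cases hx : X ω = x <;> by_cases hz : Z ω = z <;>
      simp [Prod.ext_iff, hx, hz]
  have hm23 : ∀ y z, prC p (fun ω => (Y ω, Z ω)) (y, z) = ∑ x, q x y z := by
    intro y z
    rw [hqdef]
    unfold prC
    rw [Finset.sum_comm]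
    refine Finset.sum_congr rfl fun ω _ => ?_
    by_cases hy : Y ω = y <;> by_cases hz : Z ω = z <;>
      simp [Prod.ext_iff, hy, hz]
  have hm3 : ∀ z, prC p Z z = ∑ x, ∑ y, q x y z := by
    intro z
    rw [hqdef]
    unfold prC
    rw [sum_rot (fun x y ω => if (X ω, Y ω, Z ω) = (x, y, z) then p ω else 0)]
    refine Finset.sum_congr rfl fun ω _ => ?_
    by_cases hz : Z ω = z <;> simp [Prod.ext_iff, hz, ite_and, Finset.sum_ite_eq]
  -- entropy expansions
  have e123 : entH p (fun ω => (X ω, Y ω, Z ω))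
      = -∑ z, ∑ x, ∑ y, q x y z * Real.log (q x y z) := by
    unfold entH
    rw [← sum_rot (fun x y z => q x y z * Real.log (q x y z))]
    rw [Fintype.sum_prod_type]
    congr 1
    exact Finset.sum_congr rfl fun x _ =>
      Fintype.sum_prod_type (f := fun yz : β × γ => q x yz.1 yz.2 * Real.log (q x yz.1 yz.2))
  have e3 : entH p Z = -∑ z, ∑ x, ∑ y, q x y z * Real.log (∑ x', ∑ y', q x' y' z) := by
    unfold entH
    congr 1
    refine Finset.sum_congr rfl fun z _ => ?_
    rw [hm3 z, Finset.sum_mul]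
    exact Finset.sum_congr rfl fun x _ => Finset.sum_mul _ _ _
  have e13 : entH p (fun ω => (X ω, Z ω))
      = -∑ z, ∑ x, ∑ y, q x y z * Real.log (∑ y', q x y' z) := by
    unfold entH
    congr 1
    rw [Fintype.sum_prod_type, Finset.sum_comm]
    refine Finset.sum_congr rfl fun z _ => Finset.sum_congr rfl fun x _ => ?_
    rw [hm13 x z, Finset.sum_mul]
  have e23 : entH p (fun ω => (Y ω, Z ω))
      = -∑ z, ∑ x, ∑ y, q x y z * Real.log (∑ x', q x' y z) := by
    unfold entH
    congr 1
    rw [Fintype.sum_prod_type, Finset.sum_comm]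
    refine Finset.sum_congr rfl fun z _ => ?_
    rw [show (∑ y, prC p (fun ω => (Y ω, Z ω)) (y, z) *
          Real.log (prC p (fun ω => (Y ω, Z ω)) (y, z)))
        = ∑ y, ∑ x, q x y z * Real.log (∑ x', q x' y z) from
      Finset.sum_congr rfl fun y _ => by rw [hm23 y z, Finset.sum_mul]]
    exact Finset.sum_comm
  rw [e123, e3, e13, e23]
  have main : ∀ z : γ,
      (∑ x, ∑ y, q x y z * Real.log (∑ y', q x y' z))
        + (∑ x, ∑ y, q x y z * Real.log (∑ x', q x' y z))
      ≤ (∑ x, ∑ y, q x y z * Real.log (q x y z))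
        + (∑ x, ∑ y, q x y z * Real.log (∑ x', ∑ y', q x' y' z)) := by
    intro z
    have := kernel (fun x y => q x y z) (fun x y => hq0 x y z)
    simpa [Finset.sum_add_distrib] using this
  have hfin : (∑ z, ∑ x, ∑ y, q x y z * Real.log (∑ y', q x y' z))
      + (∑ z, ∑ x, ∑ y, q x y z * Real.log (∑ x', q x' y z))
      ≤ (∑ z, ∑ x, ∑ y, q x y z * Real.log (q x y z))
      + (∑ z, ∑ x, ∑ y, q x y z * Real.log (∑ x', ∑ y', q x' y' z)) := by
    rw [← Finset.sum_add_distrib, ← Finset.sum_add_distrib]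
    exact Finset.sum_le_sum fun z _ => main z
  linarith
end s

section derived
variable {Ω α β γ : Type*} [Fintype Ω] {p : Ω → ℝ}
  [Fintype α] [DecidableEq α] [Fintype β] [DecidableEq β] [Fintype γ] [DecidableEq γ]

lemma entH_comm (X : Ω → α) (Y : Ω → β) :
    entH p (fun ω => (X ω, Y ω)) = entH p (fun ω => (Y ω, X ω)) :=
  (entH_congr (f := Prod.swap) Prod.swap_injective (fun _ => rfl)).symm

lemma entH_unit (hp1 : ∑ ω, p ω = 1) : entH p (fun _ : Ω => ()) = 0 := by
  simp [entH, prC, hp1]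

lemma mi_nonneg (hp0 : ∀ ω, 0 ≤ p ω) (hp1 : ∑ ω, p ω = 1) (X : Ω → α) (Y : Ω → β) :
    entH p (fun ω => (X ω, Y ω)) ≤ entH p X + entH p Y := by
  have h := entH_submod hp0 X Y (fun _ : Ω => ())
  have e1 : entH p (fun ω => (X ω, Y ω, ())) = entH p (fun ω => (X ω, Y ω)) :=
    entH_congr (f := fun ab : α × β => (ab.1, ab.2, ()))
      (fun a b h => by simpa [Prod.ext_iff] using h) (fun _ => rfl)
  have e2 : entH p (fun ω => (X ω, ())) = entH p X :=
    entH_congr (f := fun a : α => (a, ()))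
      (fun a b h => by simpa [Prod.ext_iff] using h) (fun _ => rfl)
  have e3 : entH p (fun ω => (Y ω, ())) = entH p Y :=
    entH_congr (f := fun a : β => (a, ()))
      (fun a b h => by simpa [Prod.ext_iff] using h) (fun _ => rfl)
  have e4 := entH_unit (p := p) hp1
  linarith

lemma cond_mono' (hp0 : ∀ ω, 0 ≤ p ω) (X : Ω → α) (Y : Ω → β) (Y' : Ω → γ)
    (g : β → γ) (hg : ∀ ω, Y' ω = g (Y ω)) :
    entH p (fun ω => (X ω, Y ω)) - entH p Y
      ≤ entH p (fun ω => (X ω, Y' ω)) - entH p Y' := by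
  have h := entH_submod hp0 X Y Y'
  have e1 : entH p (fun ω => (X ω, Y ω, Y' ω)) = entH p (fun ω => (X ω, Y ω)) :=
    entH_congr (f := fun ab : α × β => (ab.1, ab.2, g ab.2))
      (fun a b hb => by
        simp only [Prod.ext_iff] at hb ⊢
        exact ⟨hb.1, hb.2.1⟩)
      (fun ω => by simp [hg ω])
  have e2 : entH p (fun ω => (Y ω, Y' ω)) = entH p Y :=
    entH_congr (f := fun b : β => (b, g b))
      (fun a b hb => congrArg Prod.fst hb)
      (fun ω => by simp [hg ω])
  linarith

lemma mi_dp' (hp0 : ∀ ω, 0 ≤ p ω) (X : Ω → α) (U : Ω → β) (U' : Ω → γ)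
    (g : β → γ) (hg : ∀ ω, U' ω = g (U ω)) :
    entH p X + entH p U' - entH p (fun ω => (X ω, U' ω))
      ≤ entH p X + entH p U - entH p (fun ω => (X ω, U ω)) := by
  have h := entH_submod hp0 X U U'
  have e1 : entH p (fun ω => (X ω, U ω, U' ω)) = entH p (fun ω => (X ω, U ω)) :=
    entH_congr (f := fun ab : α × β => (ab.1, ab.2, g ab.2))
      (fun a b hb => by
        simp only [Prod.ext_iff] at hb ⊢
        exact ⟨hb.1, hb.2.1⟩)
      (fun ω => by simp [hg ω])
  have e2 : entH p (fun ω => (U ω, U' ω)) = entH p U :=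
    entH_congr (f := fun b : β => (b, g b))
      (fun a b hb => congrArg Prod.fst hb)
      (fun ω => by simp [hg ω])
  linarith

lemma mi_dp_left' (hp0 : ∀ ω, 0 ≤ p ω) (U : Ω → β) (U' : Ω → γ) (Y : Ω → α)
    (g : β → γ) (hg : ∀ ω, U' ω = g (U ω)) :
    entH p U' + entH p Y - entH p (fun ω => (U' ω, Y ω))
      ≤ entH p U + entH p Y - entH p (fun ω => (U ω, Y ω)) := by
  have h := mi_dp' hp0 Y U U' g hg
  have c1 : entH p (fun ω => (Y ω, U' ω)) = entH p (fun ω => (U' ω, Y ω)) :=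
    entH_comm _ _
  have c2 : entH p (fun ω => (Y ω, U ω)) = entH p (fun ω => (U ω, Y ω)) :=
    entH_comm _ _
  linarith

end derived

section tuples
variable {Ω β 𝔸 : Type*} [Fintype Ω] {p : Ω → ℝ}
  [Fintype β] [DecidableEq β] [Fintype 𝔸] [DecidableEq 𝔸] {N : ℕ}

lemma entH_empty_split (X : Fin N → Ω → 𝔸) (Z : Ω → β) :
    entH p (fun ω => ((fun m : {x // x ∈ (∅ : Finset (Fin N))} => X m.1 ω), Z ω))
      = entH p Z := by
  refine entH_congr (f := fun z : β =>
      ((fun m : {x // x ∈ (∅ : Finset (Fin N))} =>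
        absurd m.2 (Finset.notMem_empty m.1)), z))
    (fun a b h => congrArg Prod.snd h) (fun ω => ?_)
  have hfun : (fun m : {x // x ∈ (∅ : Finset (Fin N))} => X m.1 ω)
      = (fun m : {x // x ∈ (∅ : Finset (Fin N))} =>
          absurd m.2 (Finset.notMem_empty m.1)) :=
    funext fun m => absurd m.2 (Finset.notMem_empty m.1)
  rw [hfun]

lemma entH_insert_split (X : Fin N → Ω → 𝔸) (Z : Ω → β) {a : Fin N}
    {t : Finset (Fin N)} (ha : a ∉ t) :
    entH p (fun ω => ((fun m : {x // x ∈ insert a t} => X m.1 ω), Z ω))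
      = entH p (fun ω => (X a ω, ((fun m : {x // x ∈ t} => X m.1 ω), Z ω))) := by
  refine entH_congr
    (f := fun v : 𝔸 × (({x // x ∈ t} → 𝔸) × β) =>
      ((fun m : {x // x ∈ insert a t} =>
        if h : m.1 ∈ t then v.2.1 ⟨m.1, h⟩ else v.1), v.2.2))
    ?_ (fun ω => ?_)
  · intro v w h
    have h1 : (fun m : {x // x ∈ insert a t} =>
        if hm : m.1 ∈ t then v.2.1 ⟨m.1, hm⟩ else v.1)
        = (fun m : {x // x ∈ insert a t} =>
        if hm : m.1 ∈ t then w.2.1 ⟨m.1, hm⟩ else w.1) := congrArg Prod.fst h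
    have h2 := congrArg Prod.snd h
    refine Prod.ext ?_ (Prod.ext ?_ h2)
    · have := congrFun h1 ⟨a, Finset.mem_insert_self a t⟩
      simpa [dif_neg ha] using this
    · funext m
      have := congrFun h1 ⟨m.1, Finset.mem_insert_of_mem m.2⟩
      simpa [dif_pos m.2, Subtype.coe_eta] using this
  · refine Prod.ext ?_ rfl
    funext m
    show X m.1 ω = if h : m.1 ∈ t then X m.1 ω else X a ω
    by_cases hmt : m.1 ∈ t
    · rw [dif_pos hmt]
    · rw [dif_neg hmt]
      have hma : m.1 = a := by
        rcases Finset.mem_insert.1 m.2 with h | h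
        · exact h
        · exact absurd h hmt
      rw [hma]

lemma entH_subadd (hp0 : ∀ ω, 0 ≤ p ω) (X : Fin N → Ω → 𝔸) (Z : Ω → β)
    (s : Finset (Fin N)) :
    entH p (fun ω => ((fun m : {x // x ∈ s} => X m.1 ω), Z ω)) - entH p Z
      ≤ ∑ n ∈ s, (entH p (fun ω => (X n ω, Z ω)) - entH p Z) := by
  classical
  induction s using Finset.induction_on with
  | empty => rw [entH_empty_split]; simp
  | @insert a t ha ih =>
    rw [entH_insert_split X Z ha, Finset.sum_insert ha]
    have h1 : entH p (fun ω => (X a ω, ((fun m : {x // x ∈ t} => X m.1 ω), Z ω)))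
        - entH p (fun ω => ((fun m : {x // x ∈ t} => X m.1 ω), Z ω))
        ≤ entH p (fun ω => (X a ω, Z ω)) - entH p Z :=
      cond_mono' hp0 (X a) (fun ω => ((fun m : {x // x ∈ t} => X m.1 ω), Z ω)) Z
        Prod.snd (fun ω => rfl)
    linarith

end tuples

section chains
variable {Ω β 𝔸 : Type*} [Fintype Ω] {p : Ω → ℝ}
  [Fintype β] [DecidableEq β] [Fintype 𝔸] [DecidableEq 𝔸] {N : ℕ}

/-- the `n`-th chain-rule term `H(X_n | X_{<n}, Z)` -/
noncomputable def chTerm (p : Ω → ℝ) (X : Fin N → Ω → 𝔸) (Z : Ω → β) (n : Fin N) : ℝ :=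
  entH p (fun ω => (X n ω,
      ((fun m : {x // x ∈ Finset.filter (fun m => m < n) Finset.univ} => X m.1 ω), Z ω)))
    - entH p (fun ω =>
      ((fun m : {x // x ∈ Finset.filter (fun m => m < n) Finset.univ} => X m.1 ω), Z ω))

lemma chainLB (hp0 : ∀ ω, 0 ≤ p ω) (X : Fin N → Ω → 𝔸) (Z : Ω → β) :
    ∀ s : Finset (Fin N), (∀ m, m ∉ s → ∀ x ∈ s, x < m) →
      ∑ n ∈ s, chTerm p X Z n
        ≤ entH p (fun ω => ((fun m : {x // x ∈ s} => X m.1 ω), Z ω)) - entH p Z := by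
  intro s
  induction s using Finset.strongInduction with
  | _ s ih =>
    intro hinv
    rcases s.eq_empty_or_nonempty with rfl | hne
    · rw [entH_empty_split]; simp
    · set n := s.max' hne with hn
      have hnmem : n ∈ s := s.max'_mem hne
      set t := s.erase n with ht
      have hnt : n ∉ t := Finset.notMem_erase n s
      have hins : insert n t = s := Finset.insert_erase hnmem
      have htss : t ⊂ s := Finset.erase_ssubset hnmem
      have htinv : ∀ m, m ∉ t → ∀ x ∈ t, x < m := by
        intro m hmt x hxt
        by_cases hmn : m = n
        · subst hmn
          have hx1 : x ∈ s := Finset.mem_of_mem_erase hxt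
          have hx2 : x ≠ n := Finset.ne_of_mem_erase hxt
          exact lt_of_le_of_ne (s.le_max' x hx1) hx2
        · have hms : m ∉ s := by
            intro hms
            exact hmt (Finset.mem_erase.2 ⟨hmn, hms⟩)
          exact hinv m hms x (Finset.mem_of_mem_erase hxt)
      have hteq : t = Finset.filter (fun m => m < n) Finset.univ := by
        ext m
        simp only [Finset.mem_filter, Finset.mem_univ, true_and]
        constructor
        · intro hmt
          exact lt_of_le_of_ne (s.le_max' m (Finset.mem_of_mem_erase hmt))
            (Finset.ne_of_mem_erase hmt)
        · intro hmn
          by_contra hmt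
          by_cases hms : m ∈ s
          · exact hmt (Finset.mem_erase.2 ⟨ne_of_lt hmn, hms⟩)
          · exact absurd (hinv m hms n hnmem) (not_lt.2 (le_of_lt hmn))
      have hterm : chTerm p X Z n
          = entH p (fun ω => (X n ω, ((fun m : {x // x ∈ t} => X m.1 ω), Z ω)))
            - entH p (fun ω => ((fun m : {x // x ∈ t} => X m.1 ω), Z ω)) := by
        unfold chTerm
        rw [hteq]
      have hsplit : entH p (fun ω => ((fun m : {x // x ∈ s} => X m.1 ω), Z ω))
          = entH p (fun ω => (X n ω, ((fun m : {x // x ∈ t} => X m.1 ω), Z ω))) := by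
        rw [← hins]
        exact entH_insert_split X Z hnt
      have hsum : ∑ m ∈ s, chTerm p X Z m
          = chTerm p X Z n + ∑ m ∈ t, chTerm p X Z m := by
        rw [← hins, Finset.sum_insert hnt]
      have hih := ih t htss htinv
      rw [hsum, hsplit, hterm]
      linarith

lemma chainUB (hp0 : ∀ ω, 0 ≤ p ω) (X : Fin N → Ω → 𝔸) (Z : Ω → β)
    (ℰ : Finset (Fin N)) :
    ∀ s : Finset (Fin N), (∀ m ∈ ℰᶜ, m ∉ s → ∀ x ∈ s, x < m) → s ⊆ ℰᶜ →
      entH p (fun ω => ((fun m : {x // x ∈ s} => X m.1 ω),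
          ((fun m : {x // x ∈ ℰ} => X m.1 ω), Z ω)))
        - entH p (fun ω => ((fun m : {x // x ∈ ℰ} => X m.1 ω), Z ω))
      ≤ ∑ n ∈ s, chTerm p X Z n := by
  intro s
  induction s using Finset.strongInduction with
  | _ s ih =>
    intro hinv hss
    rcases s.eq_empty_or_nonempty with rfl | hne
    · rw [entH_empty_split X (fun ω => ((fun m : {x // x ∈ ℰ} => X m.1 ω), Z ω))]
      simp
    · set n := s.max' hne with hn
      have hnmem : n ∈ s := s.max'_mem hne
      set t := s.erase n with ht
      have hnt : n ∉ t := Finset.notMem_erase n s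
      have hins : insert n t = s := Finset.insert_erase hnmem
      have htss : t ⊂ s := Finset.erase_ssubset hnmem
      have htinv : ∀ m ∈ ℰᶜ, m ∉ t → ∀ x ∈ t, x < m := by
        intro m hmc hmt x hxt
        by_cases hmn : m = n
        · subst hmn
          exact lt_of_le_of_ne (s.le_max' x (Finset.mem_of_mem_erase hxt))
            (Finset.ne_of_mem_erase hxt)
        · have hms : m ∉ s := by
            intro hms
            exact hmt (Finset.mem_erase.2 ⟨hmn, hms⟩)
          exact hinv m hmc hms x (Finset.mem_of_mem_erase hxt)
      have hsplit : entH p (fun ω => ((fun m : {x // x ∈ s} => X m.1 ω),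
            ((fun m : {x // x ∈ ℰ} => X m.1 ω), Z ω)))
          = entH p (fun ω => (X n ω, ((fun m : {x // x ∈ t} => X m.1 ω),
            ((fun m : {x // x ∈ ℰ} => X m.1 ω), Z ω)))) := by
        rw [← hins]
        exact entH_insert_split X _ hnt
      -- the conditioning variables of the chain term are a function of
      -- the current conditioning variables
      have hpf : ∀ m : {x // x ∈ Finset.filter (fun m => m < n) Finset.univ},
          m.1 ∉ t → m.1 ∈ ℰ := by
        intro m hmt
        by_contra hme
        have hmc : m.1 ∈ ℰᶜ := Finset.mem_compl.2 hme
        have hmlt : m.1 < n := (Finset.mem_filter.1 m.2).2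
        have hms : m.1 ∉ s := by
          intro hms
          exact hmt (Finset.mem_erase.2 ⟨ne_of_lt hmlt, hms⟩)
        exact absurd (hinv m.1 hmc hms n hnmem) (not_lt.2 (le_of_lt hmlt))
      have hstep : entH p (fun ω => (X n ω, ((fun m : {x // x ∈ t} => X m.1 ω),
            ((fun m : {x // x ∈ ℰ} => X m.1 ω), Z ω))))
          - entH p (fun ω => ((fun m : {x // x ∈ t} => X m.1 ω),
            ((fun m : {x // x ∈ ℰ} => X m.1 ω), Z ω)))
          ≤ chTerm p X Z n := by
        unfold chTerm
        exact cond_mono' hp0 (X n)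
          (fun ω => ((fun m : {x // x ∈ t} => X m.1 ω),
            ((fun m : {x // x ∈ ℰ} => X m.1 ω), Z ω)))
          (fun ω => ((fun m : {x // x ∈ Finset.filter (fun m => m < n) Finset.univ} =>
            X m.1 ω), Z ω))
          (fun v => ((fun m : {x // x ∈ Finset.filter (fun m => m < n) Finset.univ} =>
            if h : m.1 ∈ t then v.1 ⟨m.1, h⟩ else v.2.1 ⟨m.1, by
              by_cases h2 : m.1 ∈ ℰ
              · exact h2
              · exact absurd (hpf m h) h2⟩), v.2.2))
          (fun ω => by
            refine Prod.ext ?_ rfl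
            funext m
            show X m.1 ω = if h : m.1 ∈ t then X m.1 ω else X m.1 ω
            by_cases hmt : m.1 ∈ t
            · rw [dif_pos hmt]
            · rw [dif_neg hmt])
      -- conditioning on more cannot increase: drop A_t from the condition
      have hbase : entH p (fun ω => ((fun m : {x // x ∈ t} => X m.1 ω),
            ((fun m : {x // x ∈ ℰ} => X m.1 ω), Z ω)))
          - entH p (fun ω => ((fun m : {x // x ∈ ℰ} => X m.1 ω), Z ω))
          ≤ ∑ m ∈ t, chTerm p X Z m :=
        ih t htss htinv (subset_trans (Finset.erase_subset n s) hss)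
      have hsum : ∑ m ∈ s, chTerm p X Z m
          = chTerm p X Z n + ∑ m ∈ t, chTerm p X Z m := by
        rw [← hins, Finset.sum_insert hnt]
      rw [hsum, hsplit]
      linarith

end chains


lemma inj_of_linv {α β : Sort*} {f : α → β} (g : β → α) (h : ∀ a, g (f a) = a) : Function.Injective f := fun a b hab => by rw [← h a, ← h b, hab]


/-- Lemma 2 of the ETPIR paper: splitting the total download into the part of
any `E` servers and the rest. -/
theorem stmt_1
    {Ω 𝕎 𝔹 𝔸 𝕊 : Type} [Fintype Ω] [Fintype 𝕎] [DecidableEq 𝕎]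
    [Fintype 𝔹] [DecidableEq 𝔹] [Fintype 𝔸] [DecidableEq 𝔸]
    [Fintype 𝕊] [DecidableEq 𝕊]
    {K N E : ℕ} (hK : 0 < K) (hE : 0 < E) (hEN : E < N)
    (p : Ω → ℝ) (hp0 : ∀ ω, 0 ≤ p ω) (hp1 : ∑ ω, p ω = 1)
    (W : Fin K → Ω → 𝕎) (Q : Fin N → Fin K → Ω → 𝔹)
    (A : Fin N → Fin K → Ω → 𝔸) (S : Ω → 𝕊)
    (L ε : ℝ)
    -- (i) the queries are independent of the messages
    (hQW : mutInfH p (fun ω (n : Fin N) (k : Fin K) => Q n k ω) (fun ω k => W k ω) = 0)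
    -- (ii) the common randomness is independent of the messages and queries
    (hS : mutInfH p S
      (fun ω => ((fun k => W k ω), (fun (n : Fin N) (k : Fin K) => Q n k ω))) = 0)
    -- (iii) the answers are deterministic functions of query, messages and `S`
    (hA : ∀ (n : Fin N) (k : Fin K),
      condEntH p (A n k) (fun ω => (Q n k ω, (fun j => W j ω), S ω)) = 0)
    -- `H(W_1) = L`
    (hW1 : entH p (W ⟨0, hK⟩) = L)
    -- E-security
    (hsec : ∀ ℰ : Finset (Fin N), ℰ.card = E → ∀ k : Fin K,
      mutInfH p (fun ω j => W j ω)
        (fun ω => ((fun (n : {x // x ∈ ℰ}) => A n.1 k ω),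
                   (fun (n : {x // x ∈ ℰ}) => Q n.1 k ω))) = 0)
    -- ε-correctness for message 1
    (hcor : condEntH p (W ⟨0, hK⟩)
      (fun ω => ((fun (n : Fin N) => A n ⟨0, hK⟩ ω),
                 (fun (n : Fin N) => Q n ⟨0, hK⟩ ω))) ≤ ε) :
    (1 - (E : ℝ) / N) *
        condEntH p (fun ω (n : Fin N) => A n ⟨0, hK⟩ ω)
          (fun ω (n : Fin N) => Q n ⟨0, hK⟩ ω)
      ≥ L - ε + (1 / (N.choose E : ℝ)) *
          ∑ ℰ ∈ Finset.powersetCard E (Finset.univ : Finset (Fin N)),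
            condEntH p (fun ω (n : {x // x ∈ ℰᶜ}) => A n.1 ⟨0, hK⟩ ω)
              (fun ω => (W ⟨0, hK⟩ ω,
                         (fun (n : {x // x ∈ ℰ}) => A n.1 ⟨0, hK⟩ ω),
                         (fun (n : Fin N) => Q n ⟨0, hK⟩ ω))) := by
  simp only [mutInfH, condEntH] at hQW hS hA hsec hcor ⊢
  set k0 : Fin K := ⟨0, hK⟩ with hk0
  have SEC : ∀ ℰ : Finset (Fin N), ℰ.card = E →
      L ≤ entH p (fun ω => (W k0 ω, (fun n : {x // x ∈ ℰ} => A n.1 k0 ω), (fun n => Q n k0 ω))) - entH p (fun ω => ((fun n : {x // x ∈ ℰ} => A n.1 k0 ω), (fun n => Q n k0 ω))) := by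
    intro ℰ hcard
    letI : DecidableEq ({x // x ∈ ℰ} → 𝔸) := inferInstance
    letI : DecidableEq ({x // x ∈ ℰ} → 𝔹) := inferInstance
    letI : DecidableEq (Fin K → 𝕎) := inferInstance
    letI : DecidableEq (Fin N → Fin K → 𝔹) := inferInstance
    letI : DecidableEq (Fin N → 𝔹) := inferInstance
    letI : DecidableEq (Fin N → 𝔸) := inferInstance
    have hW1' : entH p (W k0) = L := hW1
    have hsec0 : entH p (fun ω (k : Fin K) => W k ω) + entH p (fun ω => ((fun n : {x // x ∈ ℰ} => A n.1 k0 ω), (fun n : {x // x ∈ ℰ} => Q n.1 k0 ω))) - entH p (fun ω => ((fun k => W k ω), (fun n : {x // x ∈ ℰ} => A n.1 k0 ω), (fun n : {x // x ∈ ℰ} => Q n.1 k0 ω))) = 0 := hsec ℰ hcard k0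
    have hQW0 : entH p (fun ω (n : Fin N) (k : Fin K) => Q n k ω) + entH p (fun ω (k : Fin K) => W k ω) - entH p (fun ω => ((fun n k => Q n k ω), (fun k => W k ω))) = 0 := hQW
    have hS0 : entH p S + entH p (fun ω => ((fun k => W k ω), (fun n k => Q n k ω))) - entH p (fun ω => (S ω, (fun k => W k ω), (fun n k => Q n k ω))) = 0 := hS
    have i1 : entH p (fun ω => ((fun n : {x // x ∈ ℰ} => A n.1 k0 ω), (fun n k => Q n k ω), (fun n : {x // x ∈ ℰ} => Q n.1 k0 ω))) + entH p (fun ω (n : {x // x ∈ ℰ}) => Q n.1 k0 ω) ≤ entH p (fun ω => ((fun n : {x // x ∈ ℰ} => A n.1 k0 ω), (fun n : {x // x ∈ ℰ} => Q n.1 k0 ω))) + entH p (fun ω => ((fun n k => Q n k ω), (fun n : {x // x ∈ ℰ} => Q n.1 k0 ω))) :=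
      entH_submod hp0 (fun ω (n : {x // x ∈ ℰ}) => A n.1 k0 ω)
        (fun ω (n : Fin N) (k : Fin K) => Q n k ω)
        (fun ω (n : {x // x ∈ ℰ}) => Q n.1 k0 ω)
    have rA : entH p (fun ω => ((fun n : {x // x ∈ ℰ} => A n.1 k0 ω), (fun n k => Q n k ω), (fun n : {x // x ∈ ℰ} => Q n.1 k0 ω))) = entH p (fun ω => ((fun n : {x // x ∈ ℰ} => A n.1 k0 ω), (fun n k => Q n k ω))) :=
      entH_congr (f := fun v : ({x // x ∈ ℰ} → 𝔸) × (Fin N → Fin K → 𝔹) => (v.1, (v.2, fun n : {x // x ∈ ℰ} => v.2 n.1 k0)))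
        (inj_of_linv (fun u : ({x // x ∈ ℰ} → 𝔸) × ((Fin N → Fin K → 𝔹) × ({x // x ∈ ℰ} → 𝔹)) => (u.1, u.2.1)) (fun _ => rfl)) (fun _ => rfl)

    have rB : entH p (fun ω => ((fun n k => Q n k ω), (fun n : {x // x ∈ ℰ} => Q n.1 k0 ω))) = entH p (fun ω (n : Fin N) (k : Fin K) => Q n k ω) :=
      entH_congr (f := fun q : Fin N → Fin K → 𝔹 => (q, fun n : {x // x ∈ ℰ} => q n.1 k0))
        (inj_of_linv (fun u : (Fin N → Fin K → 𝔹) × ({x // x ∈ ℰ} → 𝔹) => u.1) (fun _ => rfl)) (fun _ => rfl)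

    have i2 : entH p (fun ω => (S ω, (fun n k => Q n k ω), (fun k => W k ω), (fun n : {x // x ∈ ℰ} => A n.1 k0 ω), (fun n : {x // x ∈ ℰ} => Q n.1 k0 ω))) + entH p (fun ω => ((fun k => W k ω), (fun n : {x // x ∈ ℰ} => A n.1 k0 ω), (fun n : {x // x ∈ ℰ} => Q n.1 k0 ω)))
        ≤ entH p (fun ω => (S ω, (fun k => W k ω), (fun n : {x // x ∈ ℰ} => A n.1 k0 ω), (fun n : {x // x ∈ ℰ} => Q n.1 k0 ω))) + entH p (fun ω => ((fun n k => Q n k ω), (fun k => W k ω), (fun n : {x // x ∈ ℰ} => A n.1 k0 ω), (fun n : {x // x ∈ ℰ} => Q n.1 k0 ω))) :=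
      entH_submod hp0 S (fun ω (n : Fin N) (k : Fin K) => Q n k ω)
        (fun ω => ((fun k => W k ω), (fun n : {x // x ∈ ℰ} => A n.1 k0 ω),
          (fun n : {x // x ∈ ℰ} => Q n.1 k0 ω)))
    have rC : entH p (fun ω => (S ω, (fun n k => Q n k ω), (fun k => W k ω), (fun n : {x // x ∈ ℰ} => A n.1 k0 ω), (fun n : {x // x ∈ ℰ} => Q n.1 k0 ω))) = entH p (fun ω => ((fun k => W k ω), S ω, (fun n : {x // x ∈ ℰ} => A n.1 k0 ω), (fun n k => Q n k ω))) :=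
      entH_congr (f := fun v : (Fin K → 𝕎) × (𝕊 × (({x // x ∈ ℰ} → 𝔸) × (Fin N → Fin K → 𝔹))) => (v.2.1, (v.2.2.2, (v.1, (v.2.2.1, fun n : {x // x ∈ ℰ} => v.2.2.2 n.1 k0)))))
        (inj_of_linv (fun u : 𝕊 × ((Fin N → Fin K → 𝔹) × ((Fin K → 𝕎) × (({x // x ∈ ℰ} → 𝔸) × ({x // x ∈ ℰ} → 𝔹)))) => (u.2.2.1, (u.1, (u.2.2.2.1, u.2.1)))) (fun _ => rfl)) (fun _ => rfl)

    have rD : entH p (fun ω => (S ω, (fun k => W k ω), (fun n : {x // x ∈ ℰ} => A n.1 k0 ω), (fun n : {x // x ∈ ℰ} => Q n.1 k0 ω))) = entH p (fun ω => ((fun k => W k ω), S ω, (fun n : {x // x ∈ ℰ} => A n.1 k0 ω), (fun n : {x // x ∈ ℰ} => Q n.1 k0 ω))) :=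
      entH_congr (f := fun v : (Fin K → 𝕎) × (𝕊 × (({x // x ∈ ℰ} → 𝔸) × ({x // x ∈ ℰ} → 𝔹))) => (v.2.1, (v.1, v.2.2)))
        (inj_of_linv (fun u : 𝕊 × ((Fin K → 𝕎) × (({x // x ∈ ℰ} → 𝔸) × ({x // x ∈ ℰ} → 𝔹))) => (u.2.1, (u.1, u.2.2))) (fun _ => rfl)) (fun _ => rfl)

    have rE : entH p (fun ω => ((fun n k => Q n k ω), (fun k => W k ω), (fun n : {x // x ∈ ℰ} => A n.1 k0 ω), (fun n : {x // x ∈ ℰ} => Q n.1 k0 ω))) = entH p (fun ω => ((fun k => W k ω), (fun n : {x // x ∈ ℰ} => A n.1 k0 ω), (fun n k => Q n k ω))) :=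
      entH_congr (f := fun v : (Fin K → 𝕎) × (({x // x ∈ ℰ} → 𝔸) × (Fin N → Fin K → 𝔹)) => (v.2.2, (v.1, (v.2.1, fun n : {x // x ∈ ℰ} => v.2.2 n.1 k0))))
        (inj_of_linv (fun u : (Fin N → Fin K → 𝔹) × ((Fin K → 𝕎) × (({x // x ∈ ℰ} → 𝔸) × ({x // x ∈ ℰ} → 𝔹))) => (u.2.1, (u.2.2.1, u.1))) (fun _ => rfl)) (fun _ => rfl)

    have m1 : entH p (fun ω => (((fun k => W k ω), S ω), (fun n : {x // x ∈ ℰ} => Q n.1 k0 ω))) ≤ entH p (fun ω => ((fun k => W k ω), S ω)) + entH p (fun ω (n : {x // x ∈ ℰ}) => Q n.1 k0 ω) :=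
      mi_nonneg hp0 hp1 (fun ω => ((fun k => W k ω), S ω))
        (fun ω (n : {x // x ∈ ℰ}) => Q n.1 k0 ω)
    have rF : entH p (fun ω => (((fun k => W k ω), S ω), (fun n : {x // x ∈ ℰ} => Q n.1 k0 ω))) = entH p (fun ω => ((fun k => W k ω), S ω, (fun n : {x // x ∈ ℰ} => Q n.1 k0 ω))) :=
      entH_congr (f := fun v : (Fin K → 𝕎) × (𝕊 × ({x // x ∈ ℰ} → 𝔹)) => ((v.1, v.2.1), v.2.2))
        (inj_of_linv (fun u : ((Fin K → 𝕎) × 𝕊) × ({x // x ∈ ℰ} → 𝔹) => (u.1.1, (u.1.2, u.2))) (fun _ => rfl)) (fun _ => rfl)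

    have m2 : entH p (fun ω => ((fun k => W k ω), S ω)) ≤ entH p (fun ω (k : Fin K) => W k ω) + entH p S :=
      mi_nonneg hp0 hp1 (fun ω (k : Fin K) => W k ω) S
    have m3 : entH p (fun ω => ((fun k => W k ω), S ω, (fun n k => Q n k ω))) ≤ entH p (fun ω => ((fun n : {x // x ∈ ℰ} => A n.1 k0 ω), (fun k => W k ω), S ω, (fun n k => Q n k ω))) :=
      entH_mono hp0 (fun ω (n : {x // x ∈ ℰ}) => A n.1 k0 ω)
        (fun ω => ((fun k => W k ω), S ω, (fun n k => Q n k ω)))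
    have rH : entH p (fun ω => ((fun n : {x // x ∈ ℰ} => A n.1 k0 ω), (fun k => W k ω), S ω, (fun n k => Q n k ω))) = entH p (fun ω => ((fun k => W k ω), S ω, (fun n : {x // x ∈ ℰ} => A n.1 k0 ω), (fun n k => Q n k ω))) :=
      entH_congr (f := fun v : (Fin K → 𝕎) × (𝕊 × (({x // x ∈ ℰ} → 𝔸) × (Fin N → Fin K → 𝔹))) => (v.2.2.1, (v.1, (v.2.1, v.2.2.2))))
        (inj_of_linv (fun u : ({x // x ∈ ℰ} → 𝔸) × ((Fin K → 𝕎) × (𝕊 × (Fin N → Fin K → 𝔹))) => (u.2.1, (u.2.2.1, (u.1, u.2.2.2)))) (fun _ => rfl)) (fun _ => rfl)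

    have rI : entH p (fun ω => ((fun n : {x // x ∈ ℰ} => A n.1 k0 ω), (fun k => W k ω), S ω, (fun n : {x // x ∈ ℰ} => Q n.1 k0 ω))) = entH p (fun ω => ((fun k => W k ω), S ω, (fun n : {x // x ∈ ℰ} => A n.1 k0 ω), (fun n : {x // x ∈ ℰ} => Q n.1 k0 ω))) :=
      entH_congr (f := fun v : (Fin K → 𝕎) × (𝕊 × (({x // x ∈ ℰ} → 𝔸) × ({x // x ∈ ℰ} → 𝔹))) => (v.2.2.1, (v.1, (v.2.1, v.2.2.2))))
        (inj_of_linv (fun u : ({x // x ∈ ℰ} → 𝔸) × ((Fin K → 𝕎) × (𝕊 × ({x // x ∈ ℰ} → 𝔹))) => (u.2.1, (u.2.2.1, (u.1, u.2.2.2)))) (fun _ => rfl)) (fun _ => rfl)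

    have f5 : entH p (fun ω => (S ω, (fun k => W k ω), (fun n k => Q n k ω))) = entH p (fun ω => ((fun k => W k ω), S ω, (fun n k => Q n k ω))) :=
      entH_congr (f := fun v : (Fin K → 𝕎) × (𝕊 × (Fin N → Fin K → 𝔹)) => (v.2.1, (v.1, v.2.2)))
        (inj_of_linv (fun u : 𝕊 × ((Fin K → 𝕎) × (Fin N → Fin K → 𝔹)) => (u.2.1, (u.1, u.2.2))) (fun _ => rfl)) (fun _ => rfl)

    have rG : entH p (fun ω => ((fun n k => Q n k ω), (fun k => W k ω))) = entH p (fun ω => ((fun k => W k ω), (fun n k => Q n k ω))) := entH_comm _ _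
    have sa : entH p (fun ω => ((fun n : {x // x ∈ ℰ} => A n.1 k0 ω), (fun k => W k ω), S ω, (fun n : {x // x ∈ ℰ} => Q n.1 k0 ω))) - entH p (fun ω => ((fun k => W k ω), S ω, (fun n : {x // x ∈ ℰ} => Q n.1 k0 ω)))
        ≤ ∑ n ∈ ℰ, (entH p (fun ω => (A n k0 ω, (fun k => W k ω), S ω, (fun n : {x // x ∈ ℰ} => Q n.1 k0 ω))) - entH p (fun ω => ((fun k => W k ω), S ω, (fun n : {x // x ∈ ℰ} => Q n.1 k0 ω)))) :=
      entH_subadd hp0 (fun n ω => A n k0 ω)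
        (fun ω => ((fun k => W k ω), S ω, (fun n : {x // x ∈ ℰ} => Q n.1 k0 ω))) ℰ
    have sterm : ∀ n ∈ ℰ, entH p (fun ω => (A n k0 ω, (fun k => W k ω), S ω, (fun n : {x // x ∈ ℰ} => Q n.1 k0 ω))) - entH p (fun ω => ((fun k => W k ω), S ω, (fun n : {x // x ∈ ℰ} => Q n.1 k0 ω))) ≤ 0 := by
      intro n hn
      have hc := cond_mono' hp0 (A n k0)
        (fun ω => ((fun k => W k ω), S ω, (fun m : {x // x ∈ ℰ} => Q m.1 k0 ω)))
        (fun ω => (Q n k0 ω, (fun j => W j ω), S ω))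
        (fun v => (v.2.2 ⟨n, hn⟩, (v.1, v.2.1))) (fun _ => rfl)
      have h0 := hA n k0
      linarith
    have lin3 : entH p (fun ω => ((fun n : {x // x ∈ ℰ} => A n.1 k0 ω), (fun k => W k ω), S ω, (fun n : {x // x ∈ ℰ} => Q n.1 k0 ω))) - entH p (fun ω => ((fun k => W k ω), S ω, (fun n : {x // x ∈ ℰ} => Q n.1 k0 ω))) ≤ 0 :=
      le_trans sa (Finset.sum_nonpos sterm)
    have hdp2 : entH p (fun ω (k : Fin K) => W k ω) + entH p (fun ω => ((fun n : {x // x ∈ ℰ} => A n.1 k0 ω), (fun n => Q n k0 ω))) - entH p (fun ω => ((fun k => W k ω), (fun n : {x // x ∈ ℰ} => A n.1 k0 ω), (fun n => Q n k0 ω))) ≤ entH p (fun ω (k : Fin K) => W k ω) + entH p (fun ω => ((fun n : {x // x ∈ ℰ} => A n.1 k0 ω), (fun n k => Q n k ω))) - entH p (fun ω => ((fun k => W k ω), (fun n : {x // x ∈ ℰ} => A n.1 k0 ω), (fun n k => Q n k ω))) :=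
      mi_dp' hp0 (fun ω (k : Fin K) => W k ω)
        (fun ω => ((fun n : {x // x ∈ ℰ} => A n.1 k0 ω), (fun n k => Q n k ω)))
        (fun ω => ((fun n : {x // x ∈ ℰ} => A n.1 k0 ω), (fun n => Q n k0 ω)))
        (fun v => (v.1, fun n => v.2 n k0)) (fun _ => rfl)
    have hdp1 : entH p (W k0) + entH p (fun ω => ((fun n : {x // x ∈ ℰ} => A n.1 k0 ω), (fun n => Q n k0 ω))) - entH p (fun ω => (W k0 ω, (fun n : {x // x ∈ ℰ} => A n.1 k0 ω), (fun n => Q n k0 ω))) ≤ entH p (fun ω (k : Fin K) => W k ω) + entH p (fun ω => ((fun n : {x // x ∈ ℰ} => A n.1 k0 ω), (fun n => Q n k0 ω))) - entH p (fun ω => ((fun k => W k ω), (fun n : {x // x ∈ ℰ} => A n.1 k0 ω), (fun n => Q n k0 ω))) :=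
      mi_dp_left' hp0 (fun ω (k : Fin K) => W k ω) (W k0)
        (fun ω => ((fun n : {x // x ∈ ℰ} => A n.1 k0 ω), (fun n => Q n k0 ω)))
        (fun w => w k0) (fun _ => rfl)
    linarith
  have PER : ∀ ℰ ∈ Finset.powersetCard E (Finset.univ : Finset (Fin N)),
      L - ε + (entH p (fun ω => ((fun n : {x // x ∈ ℰᶜ} => A n.1 k0 ω), W k0 ω, (fun n : {x // x ∈ ℰ} => A n.1 k0 ω), (fun n => Q n k0 ω))) - entH p (fun ω => (W k0 ω, (fun n : {x // x ∈ ℰ} => A n.1 k0 ω), (fun n => Q n k0 ω)))) ≤ ∑ n ∈ ℰᶜ, chTerm p (fun n ω => A n k0 ω) (fun ω (n : Fin N) => Q n k0 ω) n := by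
    intro ℰ hmem
    have hcard : ℰ.card = E := (Finset.mem_powersetCard.1 hmem).2
    letI : DecidableEq ({x // x ∈ ℰ} → 𝔸) := inferInstance
    letI : DecidableEq ({x // x ∈ ℰᶜ} → 𝔸) := inferInstance
    letI : DecidableEq (Fin N → 𝔹) := inferInstance
    letI : DecidableEq (Fin N → 𝔸) := inferInstance
    have hSEC := SEC ℰ hcard
    have r1 : entH p (fun ω => ((fun n : {x // x ∈ ℰᶜ} => A n.1 k0 ω), W k0 ω, (fun n : {x // x ∈ ℰ} => A n.1 k0 ω), (fun n => Q n k0 ω))) = entH p (fun ω => (W k0 ω, (fun n => A n k0 ω), (fun n => Q n k0 ω))) :=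
      entH_congr (f := fun v : 𝕎 × ((Fin N → 𝔸) × (Fin N → 𝔹)) => ((fun m : {x // x ∈ ℰᶜ} => v.2.1 m.1), (v.1, ((fun m : {x // x ∈ ℰ} => v.2.1 m.1), v.2.2))))
        (inj_of_linv (fun u : ({x // x ∈ ℰᶜ} → 𝔸) × (𝕎 × (({x // x ∈ ℰ} → 𝔸) × (Fin N → 𝔹))) => (u.2.1, ((fun n => if h : n ∈ ℰᶜ then u.1 ⟨n, h⟩ else u.2.2.1 ⟨n, by rwa [Finset.mem_compl, not_not] at h⟩), u.2.2.2))) (fun v => by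
          refine Prod.ext rfl (Prod.ext ?_ rfl)
          funext n
          by_cases h : n ∈ ℰᶜ <;> simp [h])) (fun _ => rfl)

    have hub : entH p (fun ω => ((fun n : {x // x ∈ ℰᶜ} => A n.1 k0 ω), (fun n : {x // x ∈ ℰ} => A n.1 k0 ω), (fun n => Q n k0 ω))) - entH p (fun ω => ((fun n : {x // x ∈ ℰ} => A n.1 k0 ω), (fun n => Q n k0 ω))) ≤ ∑ n ∈ ℰᶜ, chTerm p (fun n ω => A n k0 ω) (fun ω (n : Fin N) => Q n k0 ω) n :=
      chainUB hp0 (fun n ω => A n k0 ω) (fun ω (n : Fin N) => Q n k0 ω) ℰ ℰᶜ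
        (fun m hm hm' => absurd hm hm') (subset_refl _)
    have rM : entH p (fun ω => ((fun n : {x // x ∈ ℰᶜ} => A n.1 k0 ω), (fun n : {x // x ∈ ℰ} => A n.1 k0 ω), (fun n => Q n k0 ω))) = entH p (fun ω => ((fun n => A n k0 ω), (fun n => Q n k0 ω))) :=
      entH_congr (f := fun v : (Fin N → 𝔸) × (Fin N → 𝔹) => ((fun m : {x // x ∈ ℰᶜ} => v.1 m.1), ((fun m : {x // x ∈ ℰ} => v.1 m.1), v.2)))
        (inj_of_linv (fun u : ({x // x ∈ ℰᶜ} → 𝔸) × (({x // x ∈ ℰ} → 𝔸) × (Fin N → 𝔹)) => ((fun n => if h : n ∈ ℰᶜ then u.1 ⟨n, h⟩ else u.2.1 ⟨n, by rwa [Finset.mem_compl, not_not] at h⟩), u.2.2)) (fun v => by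
          refine Prod.ext ?_ rfl
          funext n
          by_cases h : n ∈ ℰᶜ <;> simp [h])) (fun _ => rfl)

    linarith
  have hlb : ∑ n, chTerm p (fun n ω => A n k0 ω) (fun ω (n : Fin N) => Q n k0 ω) n
      ≤ entH p (fun ω => ((fun m : {x // x ∈ (Finset.univ : Finset (Fin N))} => A m.1 k0 ω), (fun n => Q n k0 ω))) - entH p (fun ω (n : Fin N) => Q n k0 ω) :=
    chainLB hp0 (fun n ω => A n k0 ω) (fun ω (n : Fin N) => Q n k0 ω) Finset.univ
      (fun m hm => absurd (Finset.mem_univ m) hm)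
  have rU : entH p (fun ω => ((fun m : {x // x ∈ (Finset.univ : Finset (Fin N))} => A m.1 k0 ω), (fun n => Q n k0 ω))) = entH p (fun ω => ((fun n => A n k0 ω), (fun n => Q n k0 ω))) :=
    entH_congr (f := fun v : (Fin N → 𝔸) × (Fin N → 𝔹) => ((fun m : {x // x ∈ (Finset.univ : Finset (Fin N))} => v.1 m.1), v.2))
      (inj_of_linv (fun u : ({x // x ∈ (Finset.univ : Finset (Fin N))} → 𝔸) × (Fin N → 𝔹) => ((fun n => u.1 ⟨n, Finset.mem_univ n⟩), u.2)) (fun _ => rfl)) (fun _ => rfl)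

  have hlb2 : ∑ n, chTerm p (fun n ω => A n k0 ω) (fun ω (n : Fin N) => Q n k0 ω) n ≤ entH p (fun ω => ((fun n => A n k0 ω), (fun n => Q n k0 ω))) - entH p (fun ω (n : Fin N) => Q n k0 ω) := by linarith
  have hs1 : ∑ ℰ ∈ Finset.powersetCard E (Finset.univ : Finset (Fin N)),
        (L - ε + (entH p (fun ω => ((fun n : {x // x ∈ ℰᶜ} => A n.1 k0 ω), W k0 ω, (fun n : {x // x ∈ ℰ} => A n.1 k0 ω), (fun n => Q n k0 ω))) - entH p (fun ω => (W k0 ω, (fun n : {x // x ∈ ℰ} => A n.1 k0 ω), (fun n => Q n k0 ω)))))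
      ≤ ∑ ℰ ∈ Finset.powersetCard E (Finset.univ : Finset (Fin N)), ∑ n ∈ ℰᶜ, chTerm p (fun n ω => A n k0 ω) (fun ω (n : Fin N) => Q n k0 ω) n :=
    Finset.sum_le_sum PER
  have hcardP : (Finset.powersetCard E (Finset.univ : Finset (Fin N))).card = N.choose E := by
    rw [Finset.card_powersetCard, Finset.card_univ, Fintype.card_fin]
  have hs2 : ∑ ℰ ∈ Finset.powersetCard E (Finset.univ : Finset (Fin N)),
        (L - ε + (entH p (fun ω => ((fun n : {x // x ∈ ℰᶜ} => A n.1 k0 ω), W k0 ω, (fun n : {x // x ∈ ℰ} => A n.1 k0 ω), (fun n => Q n k0 ω))) - entH p (fun ω => (W k0 ω, (fun n : {x // x ∈ ℰ} => A n.1 k0 ω), (fun n => Q n k0 ω)))))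
      = (N.choose E : ℝ) * (L - ε)
        + ∑ ℰ ∈ Finset.powersetCard E (Finset.univ : Finset (Fin N)), (entH p (fun ω => ((fun n : {x // x ∈ ℰᶜ} => A n.1 k0 ω), W k0 ω, (fun n : {x // x ∈ ℰ} => A n.1 k0 ω), (fun n => Q n k0 ω))) - entH p (fun ω => (W k0 ω, (fun n : {x // x ∈ ℰ} => A n.1 k0 ω), (fun n => Q n k0 ω)))) := by
    rw [Finset.sum_add_distrib, Finset.sum_const, hcardP, nsmul_eq_mul]
  have hcount : ∑ ℰ ∈ Finset.powersetCard E (Finset.univ : Finset (Fin N)), ∑ n ∈ ℰᶜ, chTerm p (fun n ω => A n k0 ω) (fun ω (n : Fin N) => Q n k0 ω) n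
      = ((N - 1).choose E : ℝ) * ∑ n, chTerm p (fun n ω => A n k0 ω) (fun ω (n : Fin N) => Q n k0 ω) n := by
    calc ∑ ℰ ∈ Finset.powersetCard E (Finset.univ : Finset (Fin N)), ∑ n ∈ ℰᶜ, chTerm p (fun n ω => A n k0 ω) (fun ω (n : Fin N) => Q n k0 ω) n
        = ∑ ℰ ∈ Finset.powersetCard E (Finset.univ : Finset (Fin N)), ∑ n : Fin N,
            (if n ∈ ℰᶜ then chTerm p (fun n ω => A n k0 ω) (fun ω (n : Fin N) => Q n k0 ω) n else 0) := by
          refine Finset.sum_congr rfl fun ℰ _ => ?_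
          rw [Finset.sum_ite_mem, Finset.univ_inter]
      _ = ∑ n : Fin N, ∑ ℰ ∈ Finset.powersetCard E (Finset.univ : Finset (Fin N)),
            (if n ∈ ℰᶜ then chTerm p (fun n ω => A n k0 ω) (fun ω (n : Fin N) => Q n k0 ω) n else 0) := Finset.sum_comm
      _ = ∑ n : Fin N, ((N - 1).choose E : ℝ) * chTerm p (fun n ω => A n k0 ω) (fun ω (n : Fin N) => Q n k0 ω) n := by
          refine Finset.sum_congr rfl fun n _ => ?_
          have hfilt : (Finset.powersetCard E (Finset.univ : Finset (Fin N))).filter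
              (fun ℰ => n ∈ ℰᶜ) = Finset.powersetCard E ((Finset.univ : Finset (Fin N)).erase n) := by
            ext ℰ
            simp only [Finset.mem_filter, Finset.mem_powersetCard, Finset.mem_compl,
              Finset.subset_erase, Finset.subset_univ, true_and]
            tauto
          rw [← Finset.sum_filter, hfilt, Finset.sum_const, Finset.card_powersetCard,
            Finset.card_erase_of_mem (Finset.mem_univ n), Finset.card_univ,
            Fintype.card_fin, nsmul_eq_mul]
      _ = ((N - 1).choose E : ℝ) * ∑ n, chTerm p (fun n ω => A n k0 ω) (fun ω (n : Fin N) => Q n k0 ω) n := by rw [Finset.mul_sum]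
  have hNat : N * (N - 1).choose E = N.choose E * (N - E) := by
    have h4 : N - 1 + 1 = N := by omega
    have h5 : N - 1 - E + 1 = N - E := by omega
    have h2 : (N - 1).choose (N - 1 - E) = (N - 1).choose E := Nat.choose_symm (by omega)
    have h3 : N.choose (N - E) = N.choose E := Nat.choose_symm (le_of_lt hEN)
    have h1 := Nat.add_one_mul_choose_eq (N - 1) (N - 1 - E)
    rw [h4, h5, h2] at h1
    rw [← h3]
    exact h1
  have hNpos : (0 : ℝ) < (N : ℝ) := by
    have : 0 < N := lt_trans hE hEN
    exact_mod_cast this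
  have hCpos : (0 : ℝ) < (N.choose E : ℝ) := by
    exact_mod_cast Nat.choose_pos (le_of_lt hEN)
  have hNatR : (N : ℝ) * ((N - 1).choose E : ℝ) = (N.choose E : ℝ) * ((N : ℝ) - (E : ℝ)) := by
    have := congrArg (Nat.cast : ℕ → ℝ) hNat
    push_cast [Nat.cast_sub (le_of_lt hEN)] at this
    exact this
  have hc1nn : (0 : ℝ) ≤ ((N - 1).choose E : ℝ) := Nat.cast_nonneg _
  have h9 : ((N - 1).choose E : ℝ) * (∑ n, chTerm p (fun n ω => A n k0 ω) (fun ω (n : Fin N) => Q n k0 ω) n)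
      ≤ ((N - 1).choose E : ℝ) * (entH p (fun ω => ((fun n => A n k0 ω), (fun n => Q n k0 ω))) - entH p (fun ω (n : Fin N) => Q n k0 ω)) :=
    mul_le_mul_of_nonneg_left hlb2 hc1nn
  have hmain : (N.choose E : ℝ) * (L - ε)
        + ∑ ℰ ∈ Finset.powersetCard E (Finset.univ : Finset (Fin N)), (entH p (fun ω => ((fun n : {x // x ∈ ℰᶜ} => A n.1 k0 ω), W k0 ω, (fun n : {x // x ∈ ℰ} => A n.1 k0 ω), (fun n => Q n k0 ω))) - entH p (fun ω => (W k0 ω, (fun n : {x // x ∈ ℰ} => A n.1 k0 ω), (fun n => Q n k0 ω))))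
      ≤ ((N - 1).choose E : ℝ) * (entH p (fun ω => ((fun n => A n k0 ω), (fun n => Q n k0 ω))) - entH p (fun ω (n : Fin N) => Q n k0 ω)) := by
    rw [hs2] at hs1
    rw [hcount] at hs1
    linarith
  have hco : (N.choose E : ℝ) * (1 - (E : ℝ) / (N : ℝ)) = ((N - 1).choose E : ℝ) := by
    field_simp
    linarith [hNatR]
  have hmul : (N.choose E : ℝ) * (L - ε + (1 / (N.choose E : ℝ)) *
        ∑ ℰ ∈ Finset.powersetCard E (Finset.univ : Finset (Fin N)), (entH p (fun ω => ((fun n : {x // x ∈ ℰᶜ} => A n.1 k0 ω), W k0 ω, (fun n : {x // x ∈ ℰ} => A n.1 k0 ω), (fun n => Q n k0 ω))) - entH p (fun ω => (W k0 ω, (fun n : {x // x ∈ ℰ} => A n.1 k0 ω), (fun n => Q n k0 ω)))))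
      ≤ (N.choose E : ℝ) * ((1 - (E : ℝ) / (N : ℝ)) * (entH p (fun ω => ((fun n => A n k0 ω), (fun n => Q n k0 ω))) - entH p (fun ω (n : Fin N) => Q n k0 ω))) := by
    have e1 : (N.choose E : ℝ) * (L - ε + (1 / (N.choose E : ℝ)) *
          ∑ ℰ ∈ Finset.powersetCard E (Finset.univ : Finset (Fin N)), (entH p (fun ω => ((fun n : {x // x ∈ ℰᶜ} => A n.1 k0 ω), W k0 ω, (fun n : {x // x ∈ ℰ} => A n.1 k0 ω), (fun n => Q n k0 ω))) - entH p (fun ω => (W k0 ω, (fun n : {x // x ∈ ℰ} => A n.1 k0 ω), (fun n => Q n k0 ω)))))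
        = (N.choose E : ℝ) * (L - ε)
          + ∑ ℰ ∈ Finset.powersetCard E (Finset.univ : Finset (Fin N)), (entH p (fun ω => ((fun n : {x // x ∈ ℰᶜ} => A n.1 k0 ω), W k0 ω, (fun n : {x // x ∈ ℰ} => A n.1 k0 ω), (fun n => Q n k0 ω))) - entH p (fun ω => (W k0 ω, (fun n : {x // x ∈ ℰ} => A n.1 k0 ω), (fun n => Q n k0 ω)))) := by
      field_simp
    have e2 : (N.choose E : ℝ) * ((1 - (E : ℝ) / (N : ℝ)) * (entH p (fun ω => ((fun n => A n k0 ω), (fun n => Q n k0 ω))) - entH p (fun ω (n : Fin N) => Q n k0 ω)))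
        = ((N - 1).choose E : ℝ) * (entH p (fun ω => ((fun n => A n k0 ω), (fun n => Q n k0 ω))) - entH p (fun ω (n : Fin N) => Q n k0 ω)) := by
      rw [← hco]; ring
    rw [e1, e2]
    exact hmain
  exact le_of_mul_le_mul_left hmul hCpos
end

section
/- Suppose 0 < E < N, the message W_k satisfies H(W_k) = L, E-security holds, and ε-correctness holds for message k. Then L − ε ≤ (1 − E/N) · H(A_{[1:N]}^{[k]} | Q_{[1:N]}^{[k]}). (Consequently, in the regime E ≥ T, the ETPIR rate is at most 1 − E/N as ε/L → 0.) -/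
open Finset

section Core


variable {α β γ : Type*} [Fintype α] [Fintype β] [Fintype γ]

theorem core_ineq (q : α × β × γ → ℝ) (hq : ∀ t, 0 ≤ q t) :
    (∑ xy : α × β, (∑ z, q (xy.1, xy.2, z)) * Real.log (∑ z, q (xy.1, xy.2, z)))
    + (∑ yz : β × γ, (∑ x, q (x, yz.1, yz.2)) * Real.log (∑ x, q (x, yz.1, yz.2)))
    ≤ (∑ t, q t * Real.log (q t))
    + (∑ y : β, (∑ x, ∑ z, q (x, y, z)) * Real.log (∑ x, ∑ z, q (x, y, z))) := by
  set A : α → β → ℝ := fun x y => ∑ z, q (x, y, z) with hAdef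
  set C : β → γ → ℝ := fun y z => ∑ x, q (x, y, z) with hCdef
  set B : β → ℝ := fun y => ∑ x, ∑ z, q (x, y, z) with hBdef
  have hA0 : ∀ x y, 0 ≤ A x y := fun x y => Finset.sum_nonneg fun z _ => hq _
  have hC0 : ∀ y z, 0 ≤ C y z := fun y z => Finset.sum_nonneg fun x _ => hq _
  have hB0 : ∀ y, 0 ≤ B y := fun y => Finset.sum_nonneg fun x _ =>
    Finset.sum_nonneg fun z _ => hq _
  set s : α × β × γ → ℝ := fun t => A t.1 t.2.1 * C t.2.1 t.2.2 / B t.2.1 with hsdef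
  have hs0 : ∀ t, 0 ≤ s t := fun t =>
    div_nonneg (mul_nonneg (hA0 _ _) (hC0 _ _)) (hB0 _)
  -- rewrite the four entropy-sums as sums over triples
  have hA : (∑ xy : α × β, A xy.1 xy.2 * Real.log (A xy.1 xy.2))
      = ∑ t : α × β × γ, q t * Real.log (A t.1 t.2.1) := by
    rw [Fintype.sum_prod_type, Fintype.sum_prod_type]
    refine Finset.sum_congr rfl fun x _ => ?_
    rw [Fintype.sum_prod_type]
    refine Finset.sum_congr rfl fun y _ => ?_
    exact Finset.sum_mul _ _ _
  have hC : (∑ yz : β × γ, C yz.1 yz.2 * Real.log (C yz.1 yz.2))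
      = ∑ t : α × β × γ, q t * Real.log (C t.2.1 t.2.2) := by
    conv_rhs => rw [Fintype.sum_prod_type, Finset.sum_comm]
    refine Finset.sum_congr rfl fun yz _ => ?_
    exact Finset.sum_mul _ _ _
  have hB : (∑ y : β, B y * Real.log (B y))
      = ∑ t : α × β × γ, q t * Real.log (B t.2.1) := by
    conv_rhs => rw [Fintype.sum_prod_type, Finset.sum_comm]
    rw [Fintype.sum_prod_type]
    refine Finset.sum_congr rfl fun y _ => ?_
    have h1 : B y * Real.log (B y) = ∑ x, ∑ z, q (x, y, z) * Real.log (B y) := by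
      rw [hBdef]
      rw [Finset.sum_mul]
      exact Finset.sum_congr rfl fun x _ => Finset.sum_mul _ _ _
    rw [h1, Finset.sum_comm]
  -- pointwise Gibbs inequality
  have hpt : ∀ t, q t - s t ≤
      q t * Real.log (q t) + q t * Real.log (B t.2.1)
        - q t * Real.log (A t.1 t.2.1) - q t * Real.log (C t.2.1 t.2.2) := by
    intro t
    rcases eq_or_lt_of_le (hq t) with h0 | hpos
    · rw [← h0]
      simp only [zero_mul, zero_sub, sub_zero, add_zero, zero_add]
      linarith [hs0 t]
    · have hAp : 0 < A t.1 t.2.1 :=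
        lt_of_lt_of_le hpos (Finset.single_le_sum (f := fun z => q (t.1, t.2.1, z))
          (fun z _ => hq _) (Finset.mem_univ t.2.2))
      have hCp : 0 < C t.2.1 t.2.2 :=
        lt_of_lt_of_le hpos (Finset.single_le_sum (f := fun x => q (x, t.2.1, t.2.2))
          (fun x _ => hq _) (Finset.mem_univ t.1))
      have hBp : 0 < B t.2.1 :=
        lt_of_lt_of_le hAp (Finset.single_le_sum (f := fun x => A x t.2.1)
          (fun x _ => hA0 x t.2.1) (Finset.mem_univ t.1))
      have hsp : 0 < s t := div_pos (mul_pos hAp hCp) hBp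
      have hlog : Real.log (s t / q t) ≤ s t / q t - 1 :=
        Real.log_le_sub_one_of_pos (div_pos hsp hpos)
      have hexp : Real.log (s t / q t)
          = Real.log (A t.1 t.2.1) + Real.log (C t.2.1 t.2.2)
            - Real.log (B t.2.1) - Real.log (q t) := by
        rw [Real.log_div hsp.ne' hpos.ne', hsdef]
        rw [Real.log_div (mul_pos hAp hCp).ne' hBp.ne', Real.log_mul hAp.ne' hCp.ne']
      have hmul := mul_le_mul_of_nonneg_left hlog hpos.le
      rw [hexp] at hmul
      have h2 : q t * (s t / q t - 1) = s t - q t := by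
        field_simp
      rw [h2] at hmul
      ring_nf at hmul ⊢
      linarith [hmul]
  -- the sum of s equals the "good" part of the sum of q
  have hsum_s : ∑ t : α × β × γ, s t ≤ ∑ t : α × β × γ, q t := by
    have hss : ∑ t : α × β × γ, s t = ∑ y : β, (if B y = 0 then 0 else B y) := by
      rw [Fintype.sum_prod_type, Finset.sum_comm]
      rw [Fintype.sum_prod_type]
      refine Finset.sum_congr rfl fun y _ => ?_
      have h1 : ∀ z, (∑ x, s (x, y, z)) = B y * C y z / B y := by
        intro z
        rw [show (∑ x, s (x, y, z)) = ∑ x, A x y * C y z / B y from rfl]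
        rw [← Finset.sum_div, ← Finset.sum_mul]
      rw [Finset.sum_congr rfl fun z _ => h1 z]
      rcases eq_or_ne (B y) 0 with hB0' | hB0'
      · simp [hB0']
      · rw [if_neg hB0']
        rw [← Finset.sum_div, ← Finset.mul_sum]
        rw [show (∑ z, C y z) = B y from Finset.sum_comm]
        rw [mul_div_assoc, div_self hB0', mul_one]
    have hqq : ∑ t : α × β × γ, q t = ∑ y : β, B y := by
      conv_lhs => rw [Fintype.sum_prod_type, Finset.sum_comm, Fintype.sum_prod_type]
      exact Finset.sum_congr rfl fun y _ => Finset.sum_comm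
    rw [hss, hqq]
    refine Finset.sum_le_sum fun y _ => ?_
    split
    · exact hB0 y
    · exact le_of_eq rfl
  calc (∑ xy : α × β, A xy.1 xy.2 * Real.log (A xy.1 xy.2))
      + (∑ yz : β × γ, C yz.1 yz.2 * Real.log (C yz.1 yz.2))
      = (∑ t : α × β × γ, q t * Real.log (A t.1 t.2.1))
        + (∑ t : α × β × γ, q t * Real.log (C t.2.1 t.2.2)) := by rw [hA, hC]
    _ ≤ (∑ t, q t * Real.log (q t)) + (∑ t : α × β × γ, q t * Real.log (B t.2.1)) := by
        have h2 := Finset.sum_le_sum (fun t (_ : t ∈ (Finset.univ : Finset (α × β × γ))) => hpt t)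
        rw [Finset.sum_sub_distrib] at h2
        simp only [Finset.sum_add_distrib, Finset.sum_sub_distrib] at h2 ⊢
        linarith [hsum_s, h2]
    _ = (∑ t, q t * Real.log (q t)) + ∑ y : β, B y * Real.log (B y) := by rw [hB]

end Core

namespace ETP


set_option linter.unusedSectionVars false

variable {Ω : Type} [Fintype Ω] {α β γ : Type*}

/-- mutual determination -/
def MD (X : Ω → α) (Y : Ω → β) : Prop :=
  ∃ (f : α → β) (g : β → α), (∀ ω, f (X ω) = Y ω) ∧ (∀ ω, g (Y ω) = X ω)

theorem MD.refl (X : Ω → α) : MD X X := ⟨id, id, fun _ => rfl, fun _ => rfl⟩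

theorem MD.symm {X : Ω → α} {Y : Ω → β} (h : MD X Y) : MD Y X := by
  obtain ⟨f, g, hf, hg⟩ := h; exact ⟨g, f, hg, hf⟩

theorem MD.trans {X : Ω → α} {Y : Ω → β} {Z : Ω → γ} (h₁ : MD X Y) (h₂ : MD Y Z) : MD X Z := by
  obtain ⟨f, g, hf, hg⟩ := h₁; obtain ⟨f', g', hf', hg'⟩ := h₂
  exact ⟨f' ∘ f, g ∘ g', fun ω => by simp [hf, hf'], fun ω => by simp [hg', hg]⟩

theorem MD.pair {α' β' : Type*} {X : Ω → α} {Y : Ω → β} {X' : Ω → α'} {Y' : Ω → β'}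
    (h₁ : MD X X') (h₂ : MD Y Y') :
    MD (fun ω => (X ω, Y ω)) (fun ω => (X' ω, Y' ω)) := by
  obtain ⟨f, g, hf, hg⟩ := h₁; obtain ⟨f', g', hf', hg'⟩ := h₂
  exact ⟨Prod.map f f', Prod.map g g', fun ω => by simp [hf, hf'],
    fun ω => by simp [hg, hg']⟩

theorem MD.comm (X : Ω → α) (Y : Ω → β) :
    MD (fun ω => (X ω, Y ω)) (fun ω => (Y ω, X ω)) :=
  ⟨Prod.swap, Prod.swap, fun _ => rfl, fun _ => rfl⟩

theorem MD.assoc (X : Ω → α) (Y : Ω → β) (Z : Ω → γ) :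
    MD (fun ω => ((X ω, Y ω), Z ω)) (fun ω => (X ω, (Y ω, Z ω))) :=
  ⟨fun t => (t.1.1, (t.1.2, t.2)), fun t => ((t.1, t.2.1), t.2.2),
    fun _ => rfl, fun _ => rfl⟩

/-- the second component is a function of the first -/
theorem MD.pair_of_comp {X : Ω → α} {Y : Ω → β} (f : α → β) (hf : ∀ ω, f (X ω) = Y ω) :
    MD (fun ω => (X ω, Y ω)) X :=
  ⟨Prod.fst, fun a => (a, f a), fun _ => rfl, fun ω => by simp [hf]⟩

variable (p : Ω → ℝ)

theorem prC_nonneg (hp0 : ∀ ω, 0 ≤ p ω) [DecidableEq α] (X : Ω → α) (x : α) :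
    0 ≤ prC p X x :=
  Finset.sum_nonneg fun ω _ => by split <;> simp [hp0 ω]

theorem prC_eq_zero [DecidableEq α] {X : Ω → α} {x : α} (h : ∀ ω, X ω ≠ x) :
    prC p X x = 0 :=
  Finset.sum_eq_zero fun ω _ => by simp [h ω]

theorem prC_comp {α' : Type*} [DecidableEq α] [DecidableEq α'] [Fintype α]
    (F : α → α') (X : Ω → α) (y : α') :
    prC p (fun ω => F (X ω)) y = ∑ x, if F x = y then prC p X x else 0 := by
  unfold prC
  have key : ∀ x : α, (if F x = y then ∑ ω, if X ω = x then p ω else 0 else 0)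
      = ∑ ω, if X ω = x then (if F (X ω) = y then p ω else 0) else 0 := by
    intro x
    by_cases h : F x = y
    · rw [if_pos h]
      exact Finset.sum_congr rfl fun ω _ => by
        by_cases h2 : X ω = x
        · rw [if_pos h2, if_pos h2, if_pos (h2 ▸ h)]
        · rw [if_neg h2, if_neg h2]
    · rw [if_neg h]
      exact (Finset.sum_eq_zero fun ω _ => by
        by_cases h2 : X ω = x
        · rw [if_pos h2, if_neg (h2 ▸ h)]
        · rw [if_neg h2]).symm
  rw [Finset.sum_congr rfl fun x _ => key x, Finset.sum_comm]
  refine Finset.sum_congr rfl fun ω _ => ?_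
  rw [Finset.sum_eq_single (X ω)]
  · rw [if_pos rfl]
  · intro b _ hb
    rw [if_neg (fun h => hb h.symm)]
  · simp

theorem entH_eq_sum_image [Fintype α] [DecidableEq α] (Z : Ω → α) :
    entH p Z = -∑ z ∈ Finset.image Z Finset.univ, prC p Z z * Real.log (prC p Z z) := by
  unfold entH
  congr 1
  refine (Finset.sum_subset (Finset.subset_univ _) fun z _ hz => ?_).symm
  rw [prC_eq_zero]
  · simp
  · intro ω h'
    exact hz (Finset.mem_image.mpr ⟨ω, Finset.mem_univ ω, h'⟩)

theorem entH_congr {X : Ω → α} {Y : Ω → β} [Fintype α] [DecidableEq α]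
    [Fintype β] [DecidableEq β] (h : MD X Y) : entH p X = entH p Y := by
  obtain ⟨f, g, hf, hg⟩ := h
  have key : ∀ x ∈ Finset.image X Finset.univ, prC p Y (f x) = prC p X x := by
    rintro x hx
    obtain ⟨ω₀, -, rfl⟩ := Finset.mem_image.mp hx
    refine Finset.sum_congr rfl fun ω _ => ?_
    congr 1
    refine propext ⟨fun h2 => ?_, fun h2 => ?_⟩
    · have h3 := congrArg g h2
      rw [hg] at h3
      rw [h3, hf ω₀, hg]
    · rw [← hf ω, h2]
  have him : Finset.image Y Finset.univ = Finset.image f (Finset.image X Finset.univ) := by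
    ext y
    simp only [Finset.mem_image, Finset.mem_univ, true_and]
    constructor
    · rintro ⟨ω, rfl⟩; exact ⟨X ω, ⟨ω, rfl⟩, hf ω⟩
    · rintro ⟨x, ⟨ω, rfl⟩, rfl⟩; exact ⟨ω, (hf ω).symm⟩
  have hinj : ∀ x ∈ Finset.image X Finset.univ, ∀ x' ∈ Finset.image X Finset.univ,
      f x = f x' → x = x' := by
    rintro x hx x' hx' hff
    obtain ⟨ω, -, rfl⟩ := Finset.mem_image.mp hx
    obtain ⟨ω', -, rfl⟩ := Finset.mem_image.mp hx'
    have h3 := congrArg g hff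
    rw [hf, hf, hg, hg] at h3
    exact h3
  rw [entH_eq_sum_image, entH_eq_sum_image, him, Finset.sum_image hinj]
  congr 1
  exact Finset.sum_congr rfl fun x hx => by rw [key x hx]



theorem entH_def' [Fintype α] [DecidableEq α] (X : Ω → α) :
    entH p X = -∑ x, prC p X x * Real.log (prC p X x) := rfl

theorem mi3_nonneg (hp0 : ∀ ω, 0 ≤ p ω)
    [Fintype α] [DecidableEq α] [Fintype β] [DecidableEq β] [Fintype γ] [DecidableEq γ]
    (X : Ω → α) (Y : Ω → β) (Z : Ω → γ) :
    0 ≤ entH p (fun ω => (X ω, Y ω)) + entH p (fun ω => (Y ω, Z ω))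
        - entH p (fun ω => (X ω, Y ω, Z ω)) - entH p Y := by
  set T : Ω → α × β × γ := fun ω => (X ω, Y ω, Z ω) with hT
  set q : α × β × γ → ℝ := prC p T with hq
  have hq0 : ∀ t, 0 ≤ q t := fun t => prC_nonneg p hp0 T t
  have m1 : ∀ u : α × β, prC p (fun ω => (X ω, Y ω)) u = ∑ z, q (u.1, u.2, z) := by
    intro u
    rw [show (fun ω => (X ω, Y ω)) = (fun ω => ((T ω).1, (T ω).2.1)) from rfl]
    rw [prC_comp p (fun t : α × β × γ => (t.1, t.2.1)) T u]
    rw [Fintype.sum_prod_type]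
    rw [Finset.sum_eq_single u.1]
    · rw [Fintype.sum_prod_type, Finset.sum_eq_single u.2]
      · simp [hq]
      · intro b _ hb
        refine Finset.sum_eq_zero fun z _ => if_neg fun hc => hb ?_
        exact (Prod.mk.injEq _ _ _ _ ▸ hc).2
      · simp
    · intro b _ hb
      refine Finset.sum_eq_zero fun v _ => if_neg fun hc => hb ?_
      exact (Prod.mk.injEq _ _ _ _ ▸ hc).1
    · simp
  have m2 : ∀ u : β × γ, prC p (fun ω => (Y ω, Z ω)) u = ∑ x, q (x, u.1, u.2) := by
    intro u
    rw [show (fun ω => (Y ω, Z ω)) = (fun ω => (T ω).2) from rfl]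
    rw [prC_comp p (fun t : α × β × γ => t.2) T u]
    rw [Fintype.sum_prod_type]
    refine Finset.sum_congr rfl fun x _ => ?_
    rw [Finset.sum_eq_single u]
    · simp [hq]
    · intro b _ hb
      exact if_neg hb
    · simp
  have m3 : ∀ y : β, prC p Y y = ∑ x, ∑ z, q (x, y, z) := by
    intro y
    rw [show Y = (fun ω => (T ω).2.1) from rfl]
    rw [prC_comp p (fun t : α × β × γ => t.2.1) T y]
    rw [Fintype.sum_prod_type]
    refine Finset.sum_congr rfl fun x _ => ?_
    rw [Fintype.sum_prod_type, Finset.sum_eq_single y]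
    · simp [hq]
    · intro b _ hb
      exact Finset.sum_eq_zero fun z _ => if_neg hb
    · simp
  have goal := core_ineq q hq0
  rw [entH_def' p (fun ω => (X ω, Y ω)), entH_def' p (fun ω => (Y ω, Z ω)),
    entH_def' p Y, show entH p (fun ω => (X ω, Y ω, Z ω)) = -∑ t, q t * Real.log (q t) from rfl]
  have e1 : ∑ u : α × β, prC p (fun ω => (X ω, Y ω)) u * Real.log (prC p (fun ω => (X ω, Y ω)) u)
      = ∑ u : α × β, (∑ z, q (u.1, u.2, z)) * Real.log (∑ z, q (u.1, u.2, z)) :=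
    Finset.sum_congr rfl fun u _ => by rw [m1 u]
  have e2 : ∑ u : β × γ, prC p (fun ω => (Y ω, Z ω)) u * Real.log (prC p (fun ω => (Y ω, Z ω)) u)
      = ∑ u : β × γ, (∑ x, q (x, u.1, u.2)) * Real.log (∑ x, q (x, u.1, u.2)) :=
    Finset.sum_congr rfl fun u _ => by rw [m2 u]
  have e3 : ∑ y : β, prC p Y y * Real.log (prC p Y y)
      = ∑ y : β, (∑ x, ∑ z, q (x, y, z)) * Real.log (∑ x, ∑ z, q (x, y, z)) :=
    Finset.sum_congr rfl fun y _ => by rw [m3 y]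
  rw [e1, e2, e3]
  linarith [goal]

section Calc

variable {α' β' γ' : Type*}
variable [Fintype α] [DecidableEq α] [Fintype β] [DecidableEq β] [Fintype γ] [DecidableEq γ]
variable [Fintype α'] [DecidableEq α'] [Fintype β'] [DecidableEq β'] [Fintype γ'] [DecidableEq γ']

theorem condEntH_congr {X : Ω → α} {Y : Ω → β} {X' : Ω → α'} {Y' : Ω → β'}
    (h1 : MD X X') (h2 : MD Y Y') : condEntH p X Y = condEntH p X' Y' := by
  unfold condEntH
  rw [entH_congr p (MD.pair h1 h2), entH_congr p h2]

theorem condEntH_chain (X : Ω → α) (Y : Ω → β) (C : Ω → γ) :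
    condEntH p (fun ω => (X ω, Y ω)) C
      = condEntH p Y C + condEntH p X (fun ω => (Y ω, C ω)) := by
  unfold condEntH
  rw [entH_congr p (MD.assoc X Y C)]
  ring

/-- conditional mutual information `I(X;Z|Y)` -/
noncomputable def cmi (X : Ω → α) (Z : Ω → γ) (Y : Ω → β) : ℝ :=
  condEntH p X Y - condEntH p X (fun ω => (Y ω, Z ω))

theorem cmi_nonneg (hp0 : ∀ ω, 0 ≤ p ω) (X : Ω → α) (Z : Ω → γ) (Y : Ω → β) :
    0 ≤ cmi p X Z Y := by
  have h := mi3_nonneg p hp0 X Y Z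
  unfold cmi condEntH
  linarith [h]

theorem condEntH_of_comp {X : Ω → α} {Y : Ω → β} (φ : β → α) (h : ∀ ω, φ (Y ω) = X ω) :
    condEntH p X Y = 0 := by
  unfold condEntH
  rw [entH_congr p (⟨Prod.snd, fun y => (φ y, y), fun ω => rfl, fun ω => by simp [h ω]⟩ :
    MD (fun ω => (X ω, Y ω)) Y), sub_self]

theorem condEntH_nonneg (hp0 : ∀ ω, 0 ≤ p ω) (X : Ω → α) (Y : Ω → β) :
    0 ≤ condEntH p X Y := by
  have h := cmi_nonneg p hp0 X X Y
  unfold cmi at h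
  have h2 : condEntH p X (fun ω => (Y ω, X ω)) = 0 :=
    condEntH_of_comp p (fun u : β × α => u.2) (fun ω => rfl)
  linarith

theorem entH_const (hp1 : ∑ ω, p ω = 1) (c : α) : entH p (fun _ => c) = 0 := by
  unfold entH
  rw [neg_eq_zero]
  refine Finset.sum_eq_zero fun x _ => ?_
  have : prC p (fun _ : Ω => c) x = if c = x then 1 else 0 := by
    unfold prC
    split
    · exact hp1
    · exact Finset.sum_eq_zero fun ω _ => rfl
  rw [this]
  split <;> simp

theorem entH_eq_condEntH_const (hp1 : ∑ ω, p ω = 1) (X : Ω → α) :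
    entH p X = condEntH p X (fun _ => ()) := by
  unfold condEntH
  rw [entH_congr p (MD.pair_of_comp (X := X) (Y := fun _ => ()) (fun _ => ()) (fun _ => rfl)),
    entH_const p hp1 (), sub_zero]

theorem condEntH_pair_right_le (hp0 : ∀ ω, 0 ≤ p ω) (X : Ω → α) (Y : Ω → β) (Z : Ω → γ) :
    condEntH p X (fun ω => (Y ω, Z ω)) ≤ condEntH p X Y := by
  have h := cmi_nonneg p hp0 X Z Y
  unfold cmi at h
  linarith

theorem condEntH_mono (hp0 : ∀ ω, 0 ≤ p ω) {X : Ω → α} {C : Ω → β} {D : Ω → γ}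
    (φ : γ → β) (h : ∀ ω, φ (D ω) = C ω) : condEntH p X D ≤ condEntH p X C := by
  have h1 : condEntH p X D = condEntH p X (fun ω => (C ω, D ω)) :=
    condEntH_congr p (MD.refl X)
      ⟨fun d => (φ d, d), Prod.snd, fun ω => by simp [h ω], fun ω => rfl⟩
  rw [h1]
  exact condEntH_pair_right_le p hp0 X C D

theorem condEntH_le_entH (hp0 : ∀ ω, 0 ≤ p ω) (hp1 : ∑ ω, p ω = 1) (X : Ω → α) (Y : Ω → β) :
    condEntH p X Y ≤ entH p X := by
  rw [entH_eq_condEntH_const p hp1 X]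
  exact condEntH_mono p hp0 (fun _ => ()) (fun _ => rfl)

theorem mi_eq (X : Ω → α) (Y : Ω → β) :
    mutInfH p X Y = entH p X - condEntH p X Y := by
  unfold mutInfH condEntH
  ring

theorem mi_nonneg (hp0 : ∀ ω, 0 ≤ p ω) (hp1 : ∑ ω, p ω = 1) (X : Ω → α) (Y : Ω → β) :
    0 ≤ mutInfH p X Y := by
  rw [mi_eq]
  have := condEntH_le_entH p hp0 hp1 X Y
  linarith

theorem mi_symm (X : Ω → α) (Y : Ω → β) : mutInfH p X Y = mutInfH p Y X := by
  unfold mutInfH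
  rw [entH_congr p (MD.comm X Y)]
  ring

theorem mi_congr {X : Ω → α} {Y : Ω → β} {X' : Ω → α'} {Y' : Ω → β'}
    (h1 : MD X X') (h2 : MD Y Y') : mutInfH p X Y = mutInfH p X' Y' := by
  unfold mutInfH
  rw [entH_congr p (MD.pair h1 h2), entH_congr p h1, entH_congr p h2]

theorem mi_chain (X : Ω → α) (Z₁ : Ω → β) (Z₂ : Ω → γ) :
    mutInfH p X (fun ω => (Z₁ ω, Z₂ ω)) = mutInfH p X Z₁ + cmi p X Z₂ Z₁ := by
  unfold mutInfH cmi condEntH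
  ring

theorem cmi_congr {X : Ω → α} {Z : Ω → γ} {Y : Ω → β} {X' : Ω → α'} {Z' : Ω → γ'} {Y' : Ω → β'}
    (h1 : MD X X') (h2 : MD Z Z') (h3 : MD Y Y') : cmi p X Z Y = cmi p X' Z' Y' := by
  unfold cmi
  rw [condEntH_congr p h1 h3, condEntH_congr p h1 (MD.pair h3 h2)]

theorem cmi_symm (X : Ω → α) (Z : Ω → γ) (Y : Ω → β) : cmi p X Z Y = cmi p Z X Y := by
  unfold cmi condEntH
  rw [entH_congr p (MD.comm X Y), entH_congr p (MD.comm Z Y)]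
  have h3 : entH p (fun ω => (X ω, Y ω, Z ω)) = entH p (fun ω => (Z ω, Y ω, X ω)) :=
    entH_congr p ⟨fun t => (t.2.2, t.2.1, t.1), fun t => (t.2.2, t.2.1, t.1),
      fun ω => rfl, fun ω => rfl⟩
  rw [h3]
  ring

theorem cmi_chain (X : Ω → α) (Z₁ : Ω → γ) (Z₂ : Ω → γ') (Y : Ω → β) :
    cmi p X (fun ω => (Z₁ ω, Z₂ ω)) Y
      = cmi p X Z₁ Y + cmi p X Z₂ (fun ω => (Y ω, Z₁ ω)) := by
  unfold cmi
  have h : condEntH p X (fun ω => (Y ω, Z₁ ω, Z₂ ω))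
      = condEntH p X (fun ω => ((Y ω, Z₁ ω), Z₂ ω)) :=
    condEntH_congr p (MD.refl X) (MD.symm (MD.assoc Y Z₁ Z₂))
  rw [h]
  ring

theorem cmi_le_condEntH (hp0 : ∀ ω, 0 ≤ p ω) (X : Ω → α) (Z : Ω → γ) (Y : Ω → β) :
    cmi p X Z Y ≤ condEntH p Z Y := by
  rw [cmi_symm]
  unfold cmi
  have := condEntH_nonneg p hp0 Z (fun ω => (Y ω, X ω))
  linarith

theorem cmi_mono_left (hp0 : ∀ ω, 0 ≤ p ω) (X : Ω → α) (V : Ω → α') (Z : Ω → γ) (Y : Ω → β) :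
    cmi p X Z Y ≤ cmi p (fun ω => (X ω, V ω)) Z Y := by
  rw [cmi_symm p X Z Y, cmi_symm p _ Z Y]
  rw [cmi_chain p Z X V Y]
  have := cmi_nonneg p hp0 Z V (fun ω => (Y ω, X ω))
  linarith

theorem cmi_comp_left (hp0 : ∀ ω, 0 ≤ p ω) {X : Ω → α} {X' : Ω → α'} (f : α → α')
    (h : ∀ ω, f (X ω) = X' ω) (Z : Ω → γ) (Y : Ω → β) :
    cmi p X' Z Y ≤ cmi p X Z Y := by
  have h1 : cmi p X Z Y = cmi p (fun ω => (X' ω, X ω)) Z Y :=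
    cmi_congr p (MD.symm ⟨fun t => t.2, fun x => (f x, x), fun ω => by simp [h],
      fun ω => by simp [h]⟩) (MD.refl Z) (MD.refl Y)
  rw [h1]
  exact cmi_mono_left p hp0 X' X Z Y

theorem mi_comp_right (hp0 : ∀ ω, 0 ≤ p ω) (X : Ω → α) {Z : Ω → γ} {Z' : Ω → γ'} (f : γ → γ')
    (h : ∀ ω, f (Z ω) = Z' ω) : mutInfH p X Z' ≤ mutInfH p X Z := by
  have h1 : mutInfH p X Z = mutInfH p X (fun ω => (Z' ω, Z ω)) :=
    mi_congr p (MD.refl X) (MD.symm ⟨fun t => t.2, fun z => (f z, z), fun ω => by simp [h],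
      fun ω => by simp [h]⟩)
  rw [h1, mi_chain]
  have := cmi_nonneg p hp0 X Z Z'
  linarith

theorem mi_comp_left (hp0 : ∀ ω, 0 ≤ p ω) {X : Ω → α} {X' : Ω → α'} (f : α → α')
    (h : ∀ ω, f (X ω) = X' ω) (Z : Ω → γ) : mutInfH p X' Z ≤ mutInfH p X Z := by
  rw [mi_symm p X' Z, mi_symm p X Z]
  exact mi_comp_right p hp0 Z f h

theorem cmi_le_mi (hp0 : ∀ ω, 0 ≤ p ω) (hp1 : ∑ ω, p ω = 1)
    (X : Ω → α) (Z : Ω → γ) (Y : Ω → β) :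
    cmi p X Z Y ≤ mutInfH p X (fun ω => (Y ω, Z ω)) := by
  rw [mi_chain]
  have := mi_nonneg p hp0 hp1 X Y
  linarith

theorem condEntH_pair_le (hp0 : ∀ ω, 0 ≤ p ω) (X : Ω → α) (Y : Ω → β) (C : Ω → γ) :
    condEntH p (fun ω => (X ω, Y ω)) C ≤ condEntH p X C + condEntH p Y C := by
  rw [condEntH_chain]
  have h1 : condEntH p X (fun ω => (Y ω, C ω)) ≤ condEntH p X C :=
    condEntH_mono p hp0 (fun u => u.2) (fun ω => rfl)
  linarith

end Calc

section Windows

variable {N E : ℕ}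

/-- cyclic window of length `E` starting at `i` -/
def win (E : ℕ) (hN : 0 < N) (i : Fin N) : Finset (Fin N) :=
  Finset.image (fun j : Fin E => (⟨(i.val + j.val) % N, Nat.mod_lt _ hN⟩ : Fin N)) Finset.univ

theorem win_card (hN : 0 < N) (hEN : E ≤ N) (i : Fin N) : (win E hN i).card = E := by
  rw [win, Finset.card_image_of_injective _ ?_, Finset.card_univ, Fintype.card_fin]
  intro j₁ j₂ h
  rw [Fin.ext_iff] at h
  simp only at h
  have hm : (i.val + j₁.val) ≡ (i.val + j₂.val) [MOD N] := h
  have hm2 := Nat.ModEq.add_left_cancel' i.val hm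
  have e1 : j₁.val % N = j₁.val := Nat.mod_eq_of_lt (lt_of_lt_of_le j₁.isLt hEN)
  have e2 : j₂.val % N = j₂.val := Nat.mod_eq_of_lt (lt_of_lt_of_le j₂.isLt hEN)
  exact Fin.ext (by rw [← e1, ← e2]; exact hm2)

theorem win_count (hN : 0 < N) (hEN : E ≤ N) (n : Fin N) :
    E ≤ (Finset.univ.filter (fun i => n ∈ win E hN i)).card := by
  set σ : Fin E → Fin N := fun j => ⟨(n.val + (N - j.val)) % N, Nat.mod_lt _ hN⟩ with hσ
  have hinj : Function.Injective σ := by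
    intro j₁ j₂ h
    rw [Fin.ext_iff] at h
    simp only [hσ] at h
    have hm : (n.val + (N - j₁.val)) ≡ (n.val + (N - j₂.val)) [MOD N] := h
    have hj₁ : j₁.val ≤ N := le_of_lt (lt_of_lt_of_le j₁.isLt hEN)
    have hj₂ : j₂.val ≤ N := le_of_lt (lt_of_lt_of_le j₂.isLt hEN)
    have h3 := hm.add_right (j₁.val + j₂.val)
    have e1 : n.val + (N - j₁.val) + (j₁.val + j₂.val) = (n.val + N) + j₂.val := by omega
    have e2 : n.val + (N - j₂.val) + (j₁.val + j₂.val) = (n.val + N) + j₁.val := by omega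
    rw [e1, e2] at h3
    have h4 := Nat.ModEq.add_left_cancel' (n.val + N) h3
    have f1 : j₂.val % N = j₂.val := Nat.mod_eq_of_lt (lt_of_lt_of_le j₂.isLt hEN)
    have f2 : j₁.val % N = j₁.val := Nat.mod_eq_of_lt (lt_of_lt_of_le j₁.isLt hEN)
    exact (Fin.ext (by rw [← f1, ← f2]; exact h4.symm))
  have hmem : ∀ j : Fin E, n ∈ win E hN (σ j) := by
    intro j
    rw [win, Finset.mem_image]
    refine ⟨j, Finset.mem_univ j, ?_⟩
    apply Fin.ext
    simp only [hσ]
    rw [Nat.mod_add_mod]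
    have e1 : n.val + (N - j.val) + j.val = n.val + N := by
      have : j.val ≤ N := le_of_lt (lt_of_lt_of_le j.isLt hEN)
      omega
    rw [e1, Nat.add_mod_right]
    exact Nat.mod_eq_of_lt n.isLt
  calc E = (Finset.image σ Finset.univ).card := by
        rw [Finset.card_image_of_injective _ hinj, Finset.card_univ, Fintype.card_fin]
    _ ≤ _ := by
        apply Finset.card_le_card
        intro i hi
        obtain ⟨j, -, rfl⟩ := Finset.mem_image.mp hi
        exact Finset.mem_filter.mpr ⟨Finset.mem_univ _, hmem j⟩

end Windows

section Tuples

variable {𝔸 : Type} [Fintype 𝔸] [DecidableEq 𝔸] {N : ℕ}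

/-- the sub-tuple of answers indexed by `R`, embedded in a fixed type -/
def ASet (Y : Fin N → Ω → 𝔸) (R : Finset (Fin N)) : Ω → (Fin N → Option 𝔸) :=
  fun ω n => if n ∈ R then some (Y n ω) else none

theorem ASet_insert_MD (Y : Fin N → Ω → 𝔸) (da : 𝔸) {R : Finset (Fin N)} {a : Fin N}
    (ha : a ∉ R) :
    MD (ASet Y (insert a R)) (fun ω => (Y a ω, ASet Y R ω)) := by
  refine ⟨fun h => ((h a).getD da, fun n => if n ∈ R then h n else none),
    fun x => (fun n => if n = a then some x.1 else x.2 n), fun ω => ?_, fun ω => ?_⟩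
  · unfold ASet
    refine Prod.ext ?_ ?_
    · simp [Finset.mem_insert_self]
    · funext n
      by_cases hn : n ∈ R
      · simp [hn, Finset.mem_insert_of_mem hn]
      · simp [hn]
  · funext n
    unfold ASet
    by_cases hn : n = a
    · subst hn; simp
    · simp only [hn, if_false]
      by_cases hn2 : n ∈ R
      · simp [hn2, Finset.mem_insert, hn]
      · simp [hn2, Finset.mem_insert, hn]

theorem ASet_step (hp0 : ∀ ω, 0 ≤ p ω) [Fintype γ] [DecidableEq γ]
    (Y : Fin N → Ω → 𝔸) (da : 𝔸) {R : Finset (Fin N)} {a : Fin N} (ha : a ∉ R) (C : Ω → γ) :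
    condEntH p (ASet Y (insert a R)) C
      = condEntH p (ASet Y R) C + condEntH p (Y a) (fun ω => (ASet Y R ω, C ω)) := by
  rw [condEntH_congr p (ASet_insert_MD Y da ha) (MD.refl C)]
  exact condEntH_chain p (Y a) (ASet Y R) C

theorem ASet_le_zero (hp0 : ∀ ω, 0 ≤ p ω) [Fintype γ] [DecidableEq γ]
    (Y : Fin N → Ω → 𝔸) (da : 𝔸) (C : Ω → γ) (R : Finset (Fin N))
    (h : ∀ n ∈ R, condEntH p (Y n) C ≤ 0) :
    condEntH p (ASet Y R) C ≤ 0 := by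
  induction R using Finset.induction_on with
  | empty =>
      have h0 : condEntH p (ASet Y (∅ : Finset (Fin N))) C = 0 :=
        condEntH_of_comp p (fun _ : γ => (fun _ => none : Fin N → Option 𝔸))
          (fun ω => funext fun n => by simp [ASet])
      exact le_of_eq h0
  | @insert a R ha ih =>
      rw [ASet_step p hp0 Y da ha C]
      have h1 := ih fun n hn => h n (Finset.mem_insert_of_mem hn)
      have h2 : condEntH p (Y a) (fun ω => (ASet Y R ω, C ω)) ≤ condEntH p (Y a) C :=
        condEntH_mono p hp0 (fun u => u.2) (fun ω => rfl)
      have h3 := h a (Finset.mem_insert_self a R)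
      linarith

/-- prefix sets -/
def prefj (N : ℕ) (j : ℕ) : Finset (Fin N) := Finset.univ.filter (fun m => m.val < j)

theorem ASet_chain_eq (hp0 : ∀ ω, 0 ≤ p ω) [Fintype γ] [DecidableEq γ]
    (Y : Fin N → Ω → 𝔸) (da : 𝔸) (C : Ω → γ) (j : ℕ) :
    condEntH p (ASet Y (prefj N j)) C
      = ∑ n ∈ prefj N j, condEntH p (Y n) (fun ω => (ASet Y (prefj N n.val) ω, C ω)) := by
  induction j with
  | zero =>
      have : prefj N 0 = ∅ := by
        ext m; simp [prefj]
      rw [this]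
      simp only [Finset.sum_empty]
      exact condEntH_of_comp p (fun _ : γ => (fun _ => none : Fin N → Option 𝔸))
        (fun ω => funext fun n => by simp [ASet])
  | succ j ih =>
      by_cases hj : j < N
      · have hins : prefj N (j + 1) = insert ⟨j, hj⟩ (prefj N j) := by
          ext m
          simp only [prefj, Finset.mem_filter, Finset.mem_univ, true_and, Finset.mem_insert,
            Fin.ext_iff]
          omega
        have hnotin : (⟨j, hj⟩ : Fin N) ∉ prefj N j := by
          simp [prefj]
        rw [hins, ASet_step p hp0 Y da hnotin C, Finset.sum_insert hnotin, ih]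
        ring
      · have : prefj N (j + 1) = prefj N j := by
          ext m
          simp only [prefj, Finset.mem_filter, Finset.mem_univ, true_and]
          omega
        rw [this, ih]

theorem ASet_chain_ge (hp0 : ∀ ω, 0 ≤ p ω) [Fintype γ] [DecidableEq γ]
    (Y : Fin N → Ω → 𝔸) (da : 𝔸) (C : Ω → γ) (R : Finset (Fin N)) (j : ℕ) :
    (∑ n ∈ R ∩ prefj N j, condEntH p (Y n) (fun ω => (ASet Y (prefj N n.val) ω, C ω)))
      ≤ condEntH p (ASet Y (R ∩ prefj N j)) C := by
  induction j with
  | zero =>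
      have : R ∩ prefj N 0 = ∅ := by
        ext m; simp [prefj]
      rw [this]
      simp only [Finset.sum_empty]
      exact le_of_eq (condEntH_of_comp p (fun _ : γ => (fun _ => none : Fin N → Option 𝔸))
        (fun ω => funext fun n => by simp [ASet])).symm
  | succ j ih =>
      by_cases hj : j < N
      · by_cases haR : (⟨j, hj⟩ : Fin N) ∈ R
        · have hins : R ∩ prefj N (j + 1) = insert ⟨j, hj⟩ (R ∩ prefj N j) := by
            ext m
            simp only [prefj, Finset.mem_inter, Finset.mem_filter, Finset.mem_univ, true_and,
              Finset.mem_insert, Fin.ext_iff]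
            constructor
            · rintro ⟨h1, h2⟩
              rcases Nat.lt_succ_iff_lt_or_eq.mp h2 with h3 | h3
              · exact Or.inr ⟨h1, h3⟩
              · exact Or.inl h3
            · rintro (h1 | ⟨h1, h2⟩)
              · refine ⟨?_, by omega⟩
                have : m = ⟨j, hj⟩ := Fin.ext h1
                rwa [this]
              · exact ⟨h1, by omega⟩
          have hnotin : (⟨j, hj⟩ : Fin N) ∉ R ∩ prefj N j := by
            simp [prefj]
          rw [hins, ASet_step p hp0 Y da hnotin C, Finset.sum_insert hnotin]
          have hmono : condEntH p (Y ⟨j, hj⟩)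
              (fun ω => (ASet Y (prefj N j) ω, C ω))
              ≤ condEntH p (Y ⟨j, hj⟩) (fun ω => (ASet Y (R ∩ prefj N j) ω, C ω)) := by
            refine condEntH_mono p hp0
              (fun u => (fun n => if n ∈ R then u.1 n else none, u.2)) (fun ω => ?_)
            refine Prod.ext ?_ rfl
            funext n
            unfold ASet
            simp only
            by_cases hn : n ∈ R
            · simp [hn, Finset.mem_inter]
            · simp [hn, Finset.mem_inter]
          linarith
        · have : R ∩ prefj N (j + 1) = R ∩ prefj N j := by
            ext m
            simp only [prefj, Finset.mem_inter, Finset.mem_filter, Finset.mem_univ, true_and]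
            constructor
            · rintro ⟨h1, h2⟩
              rcases Nat.lt_succ_iff_lt_or_eq.mp h2 with h3 | h3
              · exact ⟨h1, h3⟩
              · have hm : m = ⟨j, hj⟩ := Fin.ext h3
                exact absurd (hm ▸ h1) haR
            · rintro ⟨h1, h2⟩
              exact ⟨h1, by omega⟩
          rw [this]
          exact ih
      · have : R ∩ prefj N (j + 1) = R ∩ prefj N j := by
          ext m
          simp only [prefj, Finset.mem_inter, Finset.mem_filter, Finset.mem_univ, true_and]
          have hm := m.isLt
          constructor <;> rintro ⟨h1, h2⟩ <;> exact ⟨h1, by omega⟩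
        rw [this]
        exact ih

end Tuples
end ETP


set_option maxHeartbeats 2000000

/-- Converse bound on the rate of ETPIR in the regime `E ≥ T` (Section 7.1 of
the paper): `L - ε ≤ (1 - E/N) · H(A_{[1:N]}^{[k]} | Q_{[1:N]}^{[k]})`. -/
theorem stmt_6
    {Ω 𝕎 𝔹 𝔸 𝕊 : Type} [Fintype Ω] [Fintype 𝕎] [DecidableEq 𝕎]
    [Fintype 𝔹] [DecidableEq 𝔹] [Fintype 𝔸] [DecidableEq 𝔸]
    [Fintype 𝕊] [DecidableEq 𝕊]
    {K N E : ℕ} (hE : 0 < E) (hEN : E < N)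
    (p : Ω → ℝ) (hp0 : ∀ ω, 0 ≤ p ω) (hp1 : ∑ ω, p ω = 1)
    (W : Fin K → Ω → 𝕎) (Q : Fin N → Fin K → Ω → 𝔹)
    (A : Fin N → Fin K → Ω → 𝔸) (S : Ω → 𝕊)
    (L ε : ℝ) (k : Fin K)
    -- (i) the queries are independent of the messages
    (hQW : mutInfH p (fun ω (n : Fin N) (k : Fin K) => Q n k ω) (fun ω k => W k ω) = 0)
    -- (ii) the common randomness is independent of the messages and queries
    (hS : mutInfH p S
      (fun ω => ((fun k => W k ω), (fun (n : Fin N) (k : Fin K) => Q n k ω))) = 0)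
    -- (iii) the answers are deterministic functions of query, messages and `S`
    (hA : ∀ (n : Fin N) (k : Fin K),
      condEntH p (A n k) (fun ω => (Q n k ω, (fun j => W j ω), S ω)) = 0)
    -- `H(W_k) = L`
    (hWk : entH p (W k) = L)
    -- E-security
    (hsec : ∀ ℰ : Finset (Fin N), ℰ.card = E → ∀ k : Fin K,
      mutInfH p (fun ω j => W j ω)
        (fun ω => ((fun (n : {x // x ∈ ℰ}) => A n.1 k ω),
                   (fun (n : {x // x ∈ ℰ}) => Q n.1 k ω))) = 0)
    -- ε-correctness for message k
    (hcor : condEntH p (W k)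
      (fun ω => ((fun (n : Fin N) => A n k ω),
                 (fun (n : Fin N) => Q n k ω))) ≤ ε) :
    L - ε ≤ (1 - (E : ℝ) / N) *
      condEntH p (fun ω (n : Fin N) => A n k ω) (fun ω (n : Fin N) => Q n k ω) := by
  classical
  have hN : 0 < N := hE.trans hEN
  -- nonemptiness, default elements
  have hΩ : Nonempty Ω := by
    by_contra h
    rw [not_nonempty_iff] at h
    rw [Finset.univ_eq_empty, Finset.sum_empty] at hp1
    exact one_ne_zero hp1.symm
  obtain ⟨ω₀⟩ := hΩ
  have n₀ : Fin N := ⟨0, hN⟩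
  have da : 𝔸 := A n₀ k ω₀
  have db : 𝔹 := Q n₀ k ω₀
  -- abbreviations
  set Wv : Ω → (Fin K → 𝕎) := fun ω j => W j ω with hWv
  set Gq : Ω → (Fin N → Fin K → 𝔹) := fun ω n kk => Q n kk ω with hGq
  set Qf : Ω → (Fin N → 𝔹) := fun ω n => Q n k ω with hQf
  set Af : Ω → (Fin N → 𝔸) := fun ω n => A n k ω with hAf
  -- (W, S) is independent of all the queries
  have hWSG : mutInfH p (fun ω => (Wv ω, S ω)) Gq ≤ 0 := by
    have e1 : mutInfH p (fun ω => (Wv ω, S ω)) Gq = mutInfH p Gq (fun ω => (Wv ω, S ω)) :=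
      ETP.mi_symm p _ Gq
    have e2 : mutInfH p Gq (fun ω => (Wv ω, S ω)) = mutInfH p Gq Wv + ETP.cmi p Gq S Wv :=
      ETP.mi_chain p Gq Wv S
    have e3 : mutInfH p Gq Wv = 0 := hQW
    have e4 : ETP.cmi p Gq S Wv = ETP.cmi p S Gq Wv := ETP.cmi_symm p Gq S Wv
    have e5 : ETP.cmi p S Gq Wv ≤ mutInfH p S (fun ω => (Wv ω, Gq ω)) :=
      ETP.cmi_le_mi p hp0 hp1 S Gq Wv
    have e6 : mutInfH p S (fun ω => (Wv ω, Gq ω)) = 0 := hS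
    linarith
  -- per-window key bound
  have key : ∀ R : Finset (Fin N), R.card = E →
      mutInfH p (W k) (fun ω => (Af ω, Qf ω))
        ≤ condEntH p Af Qf - condEntH p (ETP.ASet (fun n => A n k) R) Qf := by
    intro R hR
    set AS : Ω → (Fin N → Option 𝔸) := ETP.ASet (fun n => A n k) R with hAS
    set ASc : Ω → (Fin N → Option 𝔸) := ETP.ASet (fun n => A n k) Rᶜ with hASc
    set QS : Ω → (Fin N → Option 𝔹) := ETP.ASet (fun n => Q n k) R with hQS
    -- split the mutual information
    have k1 : mutInfH p (W k) (fun ω => (Af ω, Qf ω))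
        = mutInfH p (W k) (fun ω => (Qf ω, Af ω)) :=
      ETP.mi_congr p (ETP.MD.refl (W k)) (ETP.MD.comm Af Qf)
    have k2 : mutInfH p (W k) (fun ω => (Qf ω, Af ω))
        = mutInfH p (W k) Qf + ETP.cmi p (W k) Af Qf :=
      ETP.mi_chain p (W k) Qf Af
    have k3 : mutInfH p (W k) Qf ≤ mutInfH p Wv Qf :=
      ETP.mi_comp_left (X := Wv) (X' := W k) p hp0 (fun v => v k) (fun ω => rfl) Qf
    have k4 : mutInfH p Wv Qf ≤ mutInfH p Wv Gq :=
      ETP.mi_comp_right (Z := Gq) (Z' := Qf) p hp0 Wv (fun g n => g n k) (fun ω => rfl)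
    have k5 : mutInfH p Wv Gq = 0 := by
      rw [ETP.mi_symm p Wv Gq]; exact hQW
    -- split the answers into the window and its complement
    have c0 : ETP.cmi p (W k) Af Qf = ETP.cmi p (W k) (fun ω => (AS ω, ASc ω)) Qf := by
      refine ETP.cmi_congr p (ETP.MD.refl (W k)) ?_ (ETP.MD.refl Qf)
      refine ⟨fun a => (fun n => if n ∈ R then some (a n) else none,
        fun n => if n ∈ Rᶜ then some (a n) else none),
        fun x n => (if n ∈ R then x.1 n else x.2 n).getD da, fun ω => rfl, fun ω => ?_⟩
      funext n
      by_cases hn : n ∈ R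
      · simp [hAS, hASc, ETP.ASet, hn, hAf]
      · simp [hAS, hASc, ETP.ASet, hn, hAf]
    have c1 : ETP.cmi p (W k) (fun ω => (AS ω, ASc ω)) Qf
        = ETP.cmi p (W k) AS Qf + ETP.cmi p (W k) ASc (fun ω => (Qf ω, AS ω)) :=
      ETP.cmi_chain p (W k) AS ASc Qf
    have c2 : ETP.cmi p (W k) ASc (fun ω => (Qf ω, AS ω))
        ≤ condEntH p ASc (fun ω => (Qf ω, AS ω)) :=
      ETP.cmi_le_condEntH p hp0 (W k) ASc (fun ω => (Qf ω, AS ω))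
    have c3 : condEntH p ASc (fun ω => (Qf ω, AS ω))
        = condEntH p Af Qf - condEntH p AS Qf := by
      have d1 : condEntH p (fun ω => (ASc ω, AS ω)) Qf
          = condEntH p AS Qf + condEntH p ASc (fun ω => (AS ω, Qf ω)) :=
        ETP.condEntH_chain p ASc AS Qf
      have d2 : condEntH p (fun ω => (ASc ω, AS ω)) Qf = condEntH p Af Qf := by
        refine ETP.condEntH_congr p ?_ (ETP.MD.refl Qf)
        refine ⟨fun x n => (if n ∈ R then x.2 n else x.1 n).getD da,
          fun a => (fun n => if n ∈ Rᶜ then some (a n) else none,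
            fun n => if n ∈ R then some (a n) else none), fun ω => ?_, fun ω => rfl⟩
        funext n
        by_cases hn : n ∈ R
        · simp [hAS, hASc, ETP.ASet, hn, hAf]
        · simp [hAS, hASc, ETP.ASet, hn, hAf]
      have d3 : condEntH p ASc (fun ω => (AS ω, Qf ω))
          = condEntH p ASc (fun ω => (Qf ω, AS ω)) :=
        ETP.condEntH_congr p (ETP.MD.refl ASc) (ETP.MD.comm AS Qf)
      linarith
    -- security bound for the window
    have s1 : ETP.cmi p (W k) AS Qf ≤ ETP.cmi p Wv AS Qf :=
      ETP.cmi_comp_left (X := Wv) (X' := W k) p hp0 (fun v => v k) (fun ω => rfl) AS Qf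
    have s2 : ETP.cmi p Wv AS Qf ≤ mutInfH p Wv (fun ω => (Qf ω, AS ω)) :=
      ETP.cmi_le_mi p hp0 hp1 Wv AS Qf
    have s3 : mutInfH p Wv (fun ω => (Qf ω, AS ω))
        = mutInfH p Wv (fun ω => ((AS ω, QS ω), Qf ω)) := by
      refine ETP.mi_congr p (ETP.MD.refl Wv) ?_
      exact ⟨fun x => ((x.2, fun n => if n ∈ R then some (x.1 n) else none), x.1),
        fun x => (x.2, x.1.1), fun ω => rfl, fun ω => rfl⟩
    have s4 : mutInfH p Wv (fun ω => ((AS ω, QS ω), Qf ω))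
        = mutInfH p Wv (fun ω => (AS ω, QS ω))
          + ETP.cmi p Wv Qf (fun ω => (AS ω, QS ω)) :=
      ETP.mi_chain p Wv (fun ω => (AS ω, QS ω)) Qf
    have s5 : mutInfH p Wv (fun ω => (AS ω, QS ω)) = 0 := by
      have e := hsec R hR k
      have em : mutInfH p Wv (fun ω => (AS ω, QS ω))
          = mutInfH p (fun ω j => W j ω)
            (fun ω => ((fun (n : {x // x ∈ R}) => A n.1 k ω),
                       (fun (n : {x // x ∈ R}) => Q n.1 k ω))) := by
        refine ETP.mi_congr p (ETP.MD.refl Wv) ?_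
        refine ⟨fun x => (fun n => (x.1 n.1).getD da, fun n => (x.2 n.1).getD db),
          fun y => (fun n => if h : n ∈ R then some (y.1 ⟨n, h⟩) else none,
            fun n => if h : n ∈ R then some (y.2 ⟨n, h⟩) else none),
          fun ω => ?_, fun ω => ?_⟩
        · refine Prod.ext ?_ ?_
          · funext n
            simp [hAS, ETP.ASet, n.2]
          · funext n
            simp [hQS, ETP.ASet, n.2]
        · refine Prod.ext ?_ ?_
          · funext n
            by_cases hn : n ∈ R <;> simp [hAS, ETP.ASet, hn]
          · funext n
            by_cases hn : n ∈ R <;> simp [hQS, ETP.ASet, hn]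
      rw [em]
      exact e
    have s6 : ETP.cmi p Wv Qf (fun ω => (AS ω, QS ω)) ≤ 0 := by
      have t1 : ETP.cmi p Wv Qf (fun ω => (AS ω, QS ω))
          ≤ ETP.cmi p (fun ω => (Wv ω, AS ω)) Qf QS := by
        have u1 : ETP.cmi p (fun ω => (Wv ω, AS ω)) Qf QS
            = ETP.cmi p Qf (fun ω => (AS ω, Wv ω)) QS := by
          rw [ETP.cmi_symm p (fun ω => (Wv ω, AS ω)) Qf QS]
          exact ETP.cmi_congr p (ETP.MD.refl Qf) (ETP.MD.comm Wv AS) (ETP.MD.refl QS)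
        have u2 : ETP.cmi p Qf (fun ω => (AS ω, Wv ω)) QS
            = ETP.cmi p Qf AS QS + ETP.cmi p Qf Wv (fun ω => (QS ω, AS ω)) :=
          ETP.cmi_chain p Qf AS Wv QS
        have u3 : 0 ≤ ETP.cmi p Qf AS QS := ETP.cmi_nonneg p hp0 Qf AS QS
        have u4 : ETP.cmi p Qf Wv (fun ω => (QS ω, AS ω))
            = ETP.cmi p Wv Qf (fun ω => (AS ω, QS ω)) := by
          rw [ETP.cmi_symm p Qf Wv (fun ω => (QS ω, AS ω))]
          exact ETP.cmi_congr p (ETP.MD.refl Wv) (ETP.MD.refl Qf) (ETP.MD.comm QS AS)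
        linarith
      have t2 : ETP.cmi p (fun ω => (Wv ω, AS ω)) Qf QS
          ≤ ETP.cmi p (fun ω => ((Wv ω, S ω), AS ω)) Qf QS := by
        have u1 : ETP.cmi p (fun ω => (Wv ω, AS ω)) Qf QS
            ≤ ETP.cmi p (fun ω => ((Wv ω, AS ω), S ω)) Qf QS :=
          ETP.cmi_mono_left p hp0 (fun ω => (Wv ω, AS ω)) S Qf QS
        have u2 : ETP.cmi p (fun ω => ((Wv ω, AS ω), S ω)) Qf QS
            = ETP.cmi p (fun ω => ((Wv ω, S ω), AS ω)) Qf QS :=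
          ETP.cmi_congr p ⟨fun t => ((t.1.1, t.2), t.1.2), fun t => ((t.1.1, t.2), t.1.2),
            fun ω => rfl, fun ω => rfl⟩ (ETP.MD.refl Qf) (ETP.MD.refl QS)
        linarith
      have t3 : ETP.cmi p (fun ω => ((Wv ω, S ω), AS ω)) Qf QS
          = ETP.cmi p (fun ω => (Wv ω, S ω)) Qf QS
            + ETP.cmi p Qf AS (fun ω => (QS ω, (Wv ω, S ω))) := by
        rw [ETP.cmi_symm p (fun ω => ((Wv ω, S ω), AS ω)) Qf QS]
        rw [ETP.cmi_chain p Qf (fun ω => (Wv ω, S ω)) AS QS]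
        rw [ETP.cmi_symm p Qf (fun ω => (Wv ω, S ω)) QS]
      have t4 : ETP.cmi p Qf AS (fun ω => (QS ω, (Wv ω, S ω)))
          ≤ condEntH p AS (fun ω => (QS ω, (Wv ω, S ω))) :=
        ETP.cmi_le_condEntH p hp0 Qf AS (fun ω => (QS ω, (Wv ω, S ω)))
      have t5 : condEntH p AS (fun ω => (QS ω, (Wv ω, S ω))) ≤ 0 := by
        refine ETP.ASet_le_zero p hp0 (fun n => A n k) da _ R fun n hn => ?_
        have m1 : condEntH p (A n k) (fun ω => (QS ω, (Wv ω, S ω)))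
            ≤ condEntH p (A n k) (fun ω => (Q n k ω, (fun j => W j ω), S ω)) := by
          refine ETP.condEntH_mono p hp0
            (fun u => ((u.1 n).getD db, u.2.1, u.2.2)) (fun ω => ?_)
          simp [hQS, ETP.ASet, hn, hWv]
        rw [hA n k] at m1
        exact m1
      have t6 : ETP.cmi p (fun ω => (Wv ω, S ω)) Qf QS ≤ 0 := by
        have u1 : ETP.cmi p (fun ω => (Wv ω, S ω)) Qf QS
            ≤ mutInfH p (fun ω => (Wv ω, S ω)) (fun ω => (QS ω, Qf ω)) :=
          ETP.cmi_le_mi p hp0 hp1 (fun ω => (Wv ω, S ω)) Qf QS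
        have u2 : mutInfH p (fun ω => (Wv ω, S ω)) (fun ω => (QS ω, Qf ω))
            = mutInfH p (fun ω => (Wv ω, S ω)) Qf := by
          refine ETP.mi_congr p (ETP.MD.refl (fun ω => (Wv ω, S ω))) ?_
          exact ⟨Prod.snd, fun q => (fun n => if n ∈ R then some (q n) else none, q),
            fun ω => rfl, fun ω => rfl⟩
        have u3 : mutInfH p (fun ω => (Wv ω, S ω)) Qf
            ≤ mutInfH p (fun ω => (Wv ω, S ω)) Gq :=
          ETP.mi_comp_right (Z := Gq) (Z' := Qf) p hp0 (fun ω => (Wv ω, S ω))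
            (fun g n => g n k) (fun ω => rfl)
        linarith [hWSG]
      linarith
    linarith
  -- step 1 : L - ε ≤ I(W_k ; A,Q)
  have step1 : L - ε ≤ mutInfH p (W k) (fun ω => (Af ω, Qf ω)) := by
    have e0 : mutInfH p (W k) (fun ω => (Af ω, Qf ω))
        = entH p (W k) - condEntH p (W k) (fun ω => (Af ω, Qf ω)) :=
      ETP.mi_eq p (W k) (fun ω => (Af ω, Qf ω))
    have e1 : condEntH p (W k) (fun ω => (Af ω, Qf ω)) ≤ ε := hcor
    linarith [hWk ▸ le_refl (entH p (W k)), e1, e0.le, e0.ge, hWk.symm.le, hWk.le]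
  -- Shearer-type counting over the cyclic windows
  have hhnonneg : ∀ n : Fin N, 0 ≤ condEntH p (A n k)
      (fun ω => (ETP.ASet (fun m => A m k) (ETP.prefj N n.val) ω, Qf ω)) :=
    fun n => ETP.condEntH_nonneg p hp0 _ _
  have chainEq : condEntH p Af Qf = ∑ n : Fin N, condEntH p (A n k)
      (fun ω => (ETP.ASet (fun m => A m k) (ETP.prefj N n.val) ω, Qf ω)) := by
    have hUniv : ETP.prefj N N = (Finset.univ : Finset (Fin N)) := by
      ext m
      simp [ETP.prefj, m.isLt]
    have c := ETP.ASet_chain_eq p hp0 (fun m => A m k) da Qf N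
    rw [hUniv] at c
    have d : condEntH p (ETP.ASet (fun m => A m k) (Finset.univ : Finset (Fin N))) Qf
        = condEntH p Af Qf := by
      refine ETP.condEntH_congr p ?_ (ETP.MD.refl Qf)
      refine ⟨fun h n => (h n).getD da, fun a n => some (a n), fun ω => ?_, fun ω => ?_⟩
      · funext n
        simp [ETP.ASet, hAf]
      · funext n
        simp [ETP.ASet, hAf]
    rw [← d, c]
  have winGe : ∀ i : Fin N,
      (∑ n ∈ ETP.win E hN i, condEntH p (A n k)
        (fun ω => (ETP.ASet (fun m => A m k) (ETP.prefj N n.val) ω, Qf ω)))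
      ≤ condEntH p (ETP.ASet (fun m => A m k) (ETP.win E hN i)) Qf := by
    intro i
    have c := ETP.ASet_chain_ge p hp0 (fun m => A m k) da Qf (ETP.win E hN i) N
    have hUniv : ETP.prefj N N = (Finset.univ : Finset (Fin N)) := by
      ext m
      simp [ETP.prefj, m.isLt]
    rw [hUniv, Finset.inter_univ] at c
    exact c
  have sumBound : (E : ℝ) * condEntH p Af Qf
      ≤ ∑ i : Fin N, condEntH p (ETP.ASet (fun m => A m k) (ETP.win E hN i)) Qf := by
    have b1 : ∑ i : Fin N, (∑ n ∈ ETP.win E hN i, condEntH p (A n k)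
          (fun ω => (ETP.ASet (fun m => A m k) (ETP.prefj N n.val) ω, Qf ω)))
        ≤ ∑ i : Fin N, condEntH p (ETP.ASet (fun m => A m k) (ETP.win E hN i)) Qf :=
      Finset.sum_le_sum fun i _ => winGe i
    have b2 : ∑ i : Fin N, (∑ n ∈ ETP.win E hN i, condEntH p (A n k)
          (fun ω => (ETP.ASet (fun m => A m k) (ETP.prefj N n.val) ω, Qf ω)))
        = ∑ n : Fin N, ((Finset.univ.filter (fun i => n ∈ ETP.win E hN i)).card : ℝ)
            * condEntH p (A n k)
              (fun ω => (ETP.ASet (fun m => A m k) (ETP.prefj N n.val) ω, Qf ω)) := by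
      have e1 : ∀ i : Fin N, (∑ n ∈ ETP.win E hN i, condEntH p (A n k)
            (fun ω => (ETP.ASet (fun m => A m k) (ETP.prefj N n.val) ω, Qf ω)))
          = ∑ n : Fin N, if n ∈ ETP.win E hN i then condEntH p (A n k)
            (fun ω => (ETP.ASet (fun m => A m k) (ETP.prefj N n.val) ω, Qf ω)) else 0 := by
        intro i
        rw [Finset.sum_ite_mem, Finset.univ_inter]
      rw [Finset.sum_congr rfl fun i _ => e1 i, Finset.sum_comm]
      refine Finset.sum_congr rfl fun n _ => ?_
      rw [← Finset.sum_filter, Finset.sum_const, nsmul_eq_mul]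
    have b3 : ∑ n : Fin N, (E : ℝ) * condEntH p (A n k)
          (fun ω => (ETP.ASet (fun m => A m k) (ETP.prefj N n.val) ω, Qf ω))
        ≤ ∑ n : Fin N, ((Finset.univ.filter (fun i => n ∈ ETP.win E hN i)).card : ℝ)
            * condEntH p (A n k)
              (fun ω => (ETP.ASet (fun m => A m k) (ETP.prefj N n.val) ω, Qf ω)) := by
      refine Finset.sum_le_sum fun n _ => ?_
      refine mul_le_mul_of_nonneg_right ?_ (hhnonneg n)
      exact_mod_cast ETP.win_count hN hEN.le n
    rw [chainEq, Finset.mul_sum]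
    calc (∑ n : Fin N, (E : ℝ) * condEntH p (A n k)
          (fun ω => (ETP.ASet (fun m => A m k) (ETP.prefj N n.val) ω, Qf ω)))
        ≤ _ := b3
      _ = _ := b2.symm
      _ ≤ _ := b1
  -- combine: sum the per-window bound over all windows
  have perWin : ∀ i : Fin N, L - ε ≤ condEntH p Af Qf
      - condEntH p (ETP.ASet (fun m => A m k) (ETP.win E hN i)) Qf := by
    intro i
    have := key (ETP.win E hN i) (ETP.win_card hN hEN.le i)
    linarith [step1]
  have sum1 : (N : ℝ) * (L - ε)
      ≤ (N : ℝ) * condEntH p Af Qf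
        - ∑ i : Fin N, condEntH p (ETP.ASet (fun m => A m k) (ETP.win E hN i)) Qf := by
    have h1 : ∑ _i : Fin N, (L - ε) ≤ ∑ i : Fin N, (condEntH p Af Qf
        - condEntH p (ETP.ASet (fun m => A m k) (ETP.win E hN i)) Qf) :=
      Finset.sum_le_sum fun i _ => perWin i
    rw [Finset.sum_const, Finset.card_univ, Fintype.card_fin, nsmul_eq_mul,
      Finset.sum_sub_distrib, Finset.sum_const, Finset.card_univ, Fintype.card_fin,
      nsmul_eq_mul] at h1
    exact h1
  have final : (N : ℝ) * (L - ε) ≤ ((N : ℝ) - E) * condEntH p Af Qf := by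
    have := sumBound
    nlinarith [sum1, sumBound]
  have hNpos : (0 : ℝ) < N := by exact_mod_cast hN
  have hgoal : L - ε ≤ (1 - (E : ℝ) / N) * condEntH p Af Qf := by
    rw [show (1 - (E : ℝ) / N) = ((N : ℝ) - E) / N by field_simp]
    rw [div_mul_eq_mul_div, le_div_iff₀ hNpos]
    nlinarith [final]
  exact hgoal
end
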